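/- arXiv:2007.05348 — 8 statements merged into one kernel-verified Lean document; each statement's English description precedes it below -/
import Mathlib

section
/- Let I be a finite set of cardinality k ≥ 1 and let Z ⊆ I × I. Let M be the I × I matrix over the multivariate polynomial ring ℚ[x_{ij} : (i,j) ∈ I × I] defined by M i j = x_{ij} if (i,j) ∈ Z and M i j = 0 otherwise, and assume det(M) ≠ 0. Then det(M) is an irreducible polynomial if and only if M is combinatorially irreducible, i.e., there do not exist nonempty proper subsets R ⊆ I and C ⊆ I with |R| + |C| = k such that M r c = 0 for all r ∈ R and c ∈ C (equivalently, no pair of row and column permutations brings M into a nontrivial block upper triangular form with two square diagonal blocks and a zero block below the diagonal). -/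
/-!
Write `M` for the generic matrix of the pattern `Z`. If `Z` has an `R × C` zero block with
`|R| + |C| = k`, permuting the rows makes `M` block upper triangular, so `det M` is the product
of the determinants of two square diagonal blocks, neither of which is a unit since both vanish
at the origin.

Conversely, `det M` has degree exactly one in the variables of each row and of each column, so
in a factorisation `det M = f * g` both factors are homogeneous in every row and every column,
with degrees in `{0, 1}`. Following a monomial of `det M` through the factorisation, i.e. a
permutation `τ` supported by `Z`, shows that `f` has the same degree in row `τ j` as in column
`j`. If `Z` is fully indecomposable, Hall's theorem puts every entry of `Z` on such a
permutation, so the rows where `f` has degree `0` and the columns where it has degree `1` span a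
zero block of size `k`; this block is trivial only if `f` or `g` is constant.
-/

open MvPolynomial Finset

namespace MvPolynomial

variable {σ R : Type*} [CommRing R] (w : σ → ℕ)

/-- Makes the `w`-grading visible as the `T`-degree: `p` is `w`-homogeneous iff its image is a
monomial in `T`, and degree and trailing degree in `T` are additive on products. -/
noncomputable def weightTwist : MvPolynomial σ R →+* Polynomial (MvPolynomial σ R) :=
  eval₂Hom (Polynomial.C.comp C) fun v => Polynomial.C (X v) * Polynomial.X ^ w v

lemma weightTwist_monomial (m : σ →₀ ℕ) (r : R) :
    weightTwist w (monomial m r) =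
      Polynomial.C (monomial m r) * Polynomial.X ^ Finsupp.weight w m := by
  classical
  rw [weightTwist, coe_eval₂Hom, eval₂_monomial, Finsupp.prod, Finsupp.weight_apply,
    Finsupp.sum, ← prod_pow_eq_pow_sum, monomial_eq, Finsupp.prod, map_mul, map_prod]
  simp only [RingHom.coe_comp, Function.comp_apply, mul_pow, prod_mul_distrib, map_pow,
    smul_eq_mul, ← pow_mul, mul_comm (w _)]
  ring

lemma eval_one_weightTwist (p : MvPolynomial σ R) : (weightTwist w p).eval 1 = p := by
  induction p using MvPolynomial.induction_on' with
  | monomial m r => simp [weightTwist_monomial]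
  | add p q hp hq => simp [hp, hq]

lemma weightTwist_injective : Function.Injective (weightTwist (R := R) w) :=
  Function.LeftInverse.injective (eval_one_weightTwist w)

lemma coeff_weightTwist (p : MvPolynomial σ R) (n : ℕ) :
    (weightTwist w p).coeff n = weightedHomogeneousComponent w n p := by
  classical
  ext m
  rw [coeff_weightedHomogeneousComponent]
  induction p using MvPolynomial.induction_on' with
  | monomial m' r =>
    rw [weightTwist_monomial, Polynomial.coeff_C_mul_X_pow, coeff_monomial]
    by_cases hm : m' = m
    · subst hm
      split_ifs <;> simp_all
    · split_ifs <;> simp [coeff_monomial, hm]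
  | add p q hp hq =>
    simp only [map_add, Polynomial.coeff_add, coeff_add, hp, hq]
    split_ifs <;> simp

lemma weightTwist_of_isWeightedHomogeneous {p : MvPolynomial σ R} {d : ℕ}
    (hp : IsWeightedHomogeneous w p d) : weightTwist w p = Polynomial.C p * Polynomial.X ^ d := by
  ext1 n
  rw [coeff_weightTwist, Polynomial.coeff_C_mul_X_pow]
  split_ifs with h
  · exact h ▸ hp.weightedHomogeneousComponent_same
  · exact hp.weightedHomogeneousComponent_ne n h

lemma isWeightedHomogeneous_of_natTrailingDegree_weightTwist {p : MvPolynomial σ R}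
    (h : (weightTwist w p).natTrailingDegree = (weightTwist w p).natDegree) :
    IsWeightedHomogeneous w p (weightTwist w p).natDegree := by
  classical
  intro m hm
  have hne : (weightTwist w p).coeff (Finsupp.weight w m) ≠ 0 := by
    rw [coeff_weightTwist]
    intro h0
    have := congrArg (coeff m) h0
    rw [coeff_weightedHomogeneousComponent, if_pos rfl, coeff_zero] at this
    exact hm this
  have := Polynomial.natTrailingDegree_le_of_ne_zero hne
  have := Polynomial.le_natDegree_of_ne_zero hne
  omega

variable [IsDomain R]

theorem IsWeightedHomogeneous.exists_of_mul {f g : MvPolynomial σ R} {d : ℕ} (hf : f ≠ 0)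
    (hg : g ≠ 0) (h : IsWeightedHomogeneous w (f * g) d) :
    ∃ a b, a + b = d ∧ IsWeightedHomogeneous w f a ∧ IsWeightedHomogeneous w g b := by
  classical
  have hF : weightTwist w f ≠ 0 := (map_ne_zero_iff _ (weightTwist_injective w)).mpr hf
  have hG : weightTwist w g ≠ 0 := (map_ne_zero_iff _ (weightTwist_injective w)).mpr hg
  have hFG : weightTwist w f * weightTwist w g = Polynomial.monomial d (f * g) := by
    rw [← map_mul, weightTwist_of_isWeightedHomogeneous w h, Polynomial.C_mul_X_pow_eq_monomial]
  have hdeg := Polynomial.natDegree_mul hF hG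
  have htrail := Polynomial.natTrailingDegree_mul hF hG
  rw [hFG, Polynomial.natDegree_monomial, if_neg (mul_ne_zero hf hg)] at hdeg
  rw [hFG, Polynomial.natTrailingDegree_monomial (mul_ne_zero hf hg)] at htrail
  have := (weightTwist w f).natTrailingDegree_le_natDegree
  have := (weightTwist w g).natTrailingDegree_le_natDegree
  exact ⟨_, _, hdeg.symm, isWeightedHomogeneous_of_natTrailingDegree_weightTwist w (by omega),
    isWeightedHomogeneous_of_natTrailingDegree_weightTwist w (by omega)⟩

end MvPolynomial

namespace FrobeniusKonig

section Blocks

variable {n S : Type*} [Fintype n] [DecidableEq n] [CommRing S]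

lemma not_isUnit_det_of_map_eq_zero {T : Type*} [CommRing T] [Nontrivial T] [Nonempty n]
    (φ : S →+* T) {A : Matrix n n S} (hA : A.map φ = 0) : ¬ IsUnit A.det := fun h => by
  have := h.map φ
  rw [RingHom.map_det, RingHom.mapMatrix_apply, hA, Matrix.det_zero] at this
  exact not_isUnit_zero this

lemma not_irreducible_det_of_blockTriangular {T : Type*} [CommRing T] [Nontrivial T]
    (φ : S →+* T) {A : Matrix n n S} (hA : A.map φ = 0) (p : n → Prop) [DecidablePred p]
    [Nonempty {i // p i}] [Nonempty {i // ¬ p i}]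
    (h : ∀ i, ¬ p i → ∀ j, p j → A i j = 0) :
    ¬ Irreducible A.det := fun hirr => by
  rcases hirr.isUnit_or_isUnit (A.twoBlockTriangular_det p h) with h | h <;>
    exact not_isUnit_det_of_map_eq_zero φ (by ext i j; exact congr_fun₂ hA i j) h

theorem not_irreducible_det_of_zero_block {T : Type*} [CommRing T] [Nontrivial T]
    (φ : S →+* T) {A : Matrix n n S} (hA : A.map φ = 0) {R C : Finset n}
    (hR : R.Nonempty) (hC : C.Nonempty) (hcard : #R + #C = Fintype.card n)
    (hzero : ∀ r ∈ R, ∀ c ∈ C, A r c = 0) : ¬ Irreducible A.det := by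
  have hcardCompl : Fintype.card {i // i ∉ C} = Fintype.card {i // i ∈ R} := by
    rw [Fintype.card_subtype_compl, Fintype.card_coe, Fintype.card_coe]
    omega
  let π : Equiv.Perm n := (Fintype.equivOfCardEq hcardCompl).extendSubtype
  have hπ : ∀ i ∉ C, π i ∈ R := fun i hi => Equiv.extendSubtype_mem _ i hi
  have : Nonempty {i // i ∈ C} := hC.to_subtype
  have : Nonempty {i // i ∉ C} :=
    Fintype.card_pos_iff.mp (by rw [hcardCompl, Fintype.card_coe]; exact hR.card_pos)
  have hsign : IsUnit ((Equiv.Perm.sign π : ℤ) : S) :=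
    (Equiv.Perm.sign π).isUnit.map (Int.castRingHom S)
  rw [← irreducible_isUnit_mul hsign, ← Matrix.det_permute]
  exact not_irreducible_det_of_blockTriangular φ (by rw [← Matrix.submatrix_map, hA]; rfl)
    (· ∈ C) fun i hi j hj => hzero _ (hπ i hi) _ hj

end Blocks

section Hall

variable {n : Type*} [Fintype n]

/-- `Z i j` marks the entries of a square matrix that are allowed to be nonzero. -/
def PartlyDecomposable (Z : n → n → Prop) : Prop :=
  ∃ R C : Finset n, R.Nonempty ∧ C.Nonempty ∧ #R + #C = Fintype.card n ∧
    ∀ r ∈ R, ∀ c ∈ C, ¬ Z r c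

lemma ne_univ_of_card_add_card_eq {R C : Finset n} (hC : C.Nonempty)
    (h : #R + #C = Fintype.card n) : R ≠ univ := by
  rintro rfl
  rw [card_univ] at h
  have := hC.card_pos
  omega

variable {Z : n → n → Prop} [DecidableRel Z] {σ : Equiv.Perm n}

lemma card_le_card_filter_of_perm (hσ : ∀ j, Z (σ j) j) (S : Finset n) :
    #S ≤ #{i | ∃ j ∈ S, Z i j} :=
  calc #S = #(S.map σ.toEmbedding) := (card_map _).symm
    _ ≤ _ := card_le_card fun i hi => by
      obtain ⟨j, hj, rfl⟩ := mem_map.mp hi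
      exact mem_filter.mpr ⟨mem_univ _, j, hj, hσ j⟩

lemma card_lt_card_filter_of_not_partlyDecomposable [DecidableEq n] (hZ : ¬ PartlyDecomposable Z)
    (hσ : ∀ j, Z (σ j) j) {S : Finset n} (hS : S.Nonempty) (hSu : S ≠ univ) :
    #S < #{i | ∃ j ∈ S, Z i j} := by
  refine (card_le_card_filter_of_perm hσ S).lt_of_ne fun heq =>
    hZ ⟨({i | ∃ j ∈ S, Z i j} : Finset n)ᶜ, S, ?_, hS, ?_, ?_⟩
  · rw [← card_pos, card_compl, ← heq]
    have := (card_lt_iff_ne_univ S).mpr hSu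
    omega
  · rw [card_compl, ← heq]
    have := card_le_univ S
    omega
  · intro r hr c hc hrc
    exact mem_compl.mp hr (mem_filter.mpr ⟨mem_univ _, c, hc, hrc⟩)

theorem exists_perm_apply_eq_of_not_partlyDecomposable [DecidableEq n]
    (hZ : ¬ PartlyDecomposable Z) (hσ : ∀ j, Z (σ j) j) {r c : n} (hrc : Z r c) :
    ∃ τ : Equiv.Perm n, (∀ j, Z (τ j) j) ∧ τ c = r := by
  classical
  -- Hall's condition for the pattern in which column `c` may only go to row `r`
  let t : n → n → Prop := fun j i => if j = c then i = r else Z i j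
  have hHall : ∀ S : Finset n, #S ≤ #{i | ∃ j ∈ S, t j i} := by
    intro S
    have hsub : ({i | ∃ j ∈ S.erase c, Z i j} : Finset n) ⊆
        ({i | ∃ j ∈ S, t j i} : Finset n) := by
      intro i hi
      obtain ⟨j, hj, hij⟩ := (mem_filter.mp hi).2
      exact mem_filter.mpr
        ⟨mem_univ _, j, mem_of_mem_erase hj, by simp [t, ne_of_mem_erase hj, hij]⟩
    by_cases hcS : c ∈ S
    · rcases (S.erase c).eq_empty_or_nonempty with hS' | hS'
      · rw [← insert_erase hcS, hS', insert_empty, card_singleton, one_le_card]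
        exact ⟨r, mem_filter.mpr ⟨mem_univ _, c, mem_singleton_self c, by simp [t]⟩⟩
      · calc #S = #(S.erase c) + 1 := (card_erase_add_one hcS).symm
          _ ≤ #{i | ∃ j ∈ S.erase c, Z i j} :=
            card_lt_card_filter_of_not_partlyDecomposable hZ hσ hS'
              fun h => notMem_erase c S (h ▸ mem_univ c)
          _ ≤ _ := card_le_card hsub
    · calc #S = #(S.erase c) := by rw [erase_eq_of_notMem hcS]
        _ ≤ _ := card_le_card_filter_of_perm hσ _
        _ ≤ _ := card_le_card hsub
  obtain ⟨f, hf, hft⟩ := (Fintype.all_card_le_filter_rel_iff_exists_injective t).mp hHall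
  have hfc : f c = r := by simpa [t] using hft c
  refine ⟨Equiv.ofBijective f (Finite.injective_iff_bijective.mp hf), fun j => ?_, hfc⟩
  by_cases hj : j = c
  · subst hj
    simpa [hfc] using hrc
  · simpa [t, hj] using hft j

end Hall

section Pattern

variable {I K : Type*} [Field K] (Z : I → I → Prop) [DecidableRel Z]

variable (K) in
noncomputable def patternMatrix : Matrix I I (MvPolynomial (I × I) K) :=
  Matrix.of fun i j => if Z i j then X (i, j) else 0

lemma patternMatrix_apply_eq_zero_iff {i j : I} : patternMatrix K Z i j = 0 ↔ ¬ Z i j := by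
  by_cases h : Z i j <;> simp [patternMatrix, h, X_ne_zero]

lemma patternMatrix_map_constantCoeff : (patternMatrix K Z).map constantCoeff = 0 := by
  ext i j
  by_cases h : Z i j <;> simp [patternMatrix, h]

variable [Fintype I]

noncomputable def permMonomial (σ : Equiv.Perm I) : I × I →₀ ℕ :=
  ∑ j, Finsupp.single (σ j, j) 1

lemma prod_patternMatrix (σ : Equiv.Perm I) :
    ∏ j, patternMatrix K Z (σ j) j =
      if ∀ j, Z (σ j) j then monomial (permMonomial σ) 1 else 0 := by
  split_ifs with h
  · rw [permMonomial, monomial_sum_one]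
    exact prod_congr rfl fun j _ => by simp [patternMatrix, h j, X]
  · obtain ⟨j, hj⟩ := not_forall.mp h
    exact prod_eq_zero (mem_univ j) (by simp [patternMatrix, hj])

variable [DecidableEq I]

lemma permMonomial_apply (σ : Equiv.Perm I) (i j : I) :
    permMonomial σ (i, j) = if σ j = i then 1 else 0 := by
  rw [permMonomial, Finsupp.finsetSum_apply, sum_eq_single j]
  · simp [Finsupp.single_apply]
  · intro j' _ hj'
    simp [Ne.symm hj']
  · simp

lemma permMonomial_injective : Function.Injective (permMonomial (I := I)) := by
  intro σ τ h
  ext j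
  simpa [permMonomial_apply, eq_comm] using DFunLike.congr_fun h (σ j, j)

lemma eq_sum_single_of_le_permMonomial {σ : Equiv.Perm I} {m : I × I →₀ ℕ}
    (hm : m ≤ permMonomial σ) : m = ∑ j, Finsupp.single (σ j, j) (m (σ j, j)) := by
  ext ⟨i, j⟩
  rw [Finsupp.finsetSum_apply, sum_eq_single j]
  · have := hm (i, j)
    rw [permMonomial_apply] at this
    by_cases h : σ j = i
    · simp [h]
    · simp only [if_neg h, nonpos_iff_eq_zero] at this
      simp [h, this]
  · intro j' _ hj'
    simp [Ne.symm hj']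
  · simp

lemma coeff_det_patternMatrix (m : I × I →₀ ℕ) :
    coeff m (patternMatrix K Z).det =
      ∑ σ with (∀ j, Z (σ j) j) ∧ permMonomial σ = m, (Equiv.Perm.sign σ : K) := by
  simp only [Matrix.det_apply, prod_patternMatrix, coeff_sum, Units.smul_def, sum_filter]
  refine sum_congr rfl fun σ _ => ?_
  by_cases h : ∀ j, Z (σ j) j
  · rw [if_pos h, coeff_smul, coeff_monomial]
    simp [h, eq_comm]
  · simp [h]

lemma coeff_permMonomial_det_ne_zero {σ : Equiv.Perm I} (hσ : ∀ j, Z (σ j) j) :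
    coeff (permMonomial σ) (patternMatrix K Z).det ≠ 0 := by
  rw [coeff_det_patternMatrix, sum_eq_single_of_mem σ (by simp [hσ])
    fun τ hτ hne => absurd (permMonomial_injective (mem_filter.mp hτ).2.2) hne]
  rcases Int.units_eq_one_or (Equiv.Perm.sign σ) with h | h <;> simp [h]

lemma exists_perm_of_coeff_det_ne_zero {m : I × I →₀ ℕ}
    (hm : coeff m (patternMatrix K Z).det ≠ 0) :
    ∃ σ : Equiv.Perm I, (∀ j, Z (σ j) j) ∧ permMonomial σ = m := by
  rw [coeff_det_patternMatrix] at hm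
  obtain ⟨σ, hσ, -⟩ := exists_ne_zero_of_sum_ne_zero hm
  exact ⟨σ, (mem_filter.mp hσ).2⟩

end Pattern

section RowColumnWeights

variable {I : Type*} [DecidableEq I]

def rowWeight (i : I) : I × I → ℕ := fun v => if v.1 = i then 1 else 0

def colWeight (j : I) : I × I → ℕ := fun v => if v.2 = j then 1 else 0

lemma exists_ne_zero_of_isWeightedHomogeneous_rowWeight {K : Type*} [Field K]
    {f : MvPolynomial (I × I) K} (hf0 : f ≠ 0) (hf : ¬ IsUnit f) {a : I → ℕ}
    (ha : ∀ i, IsWeightedHomogeneous (rowWeight i) f (a i)) : ∃ i, a i ≠ 0 := by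
  by_contra! h
  have hsupp : ∀ m ∈ f.support, m = 0 := fun m hm => by
    ext v
    have := Finsupp.le_weight (rowWeight v.1) (s := v) (by simp [rowWeight]) m
    rw [ha v.1 (mem_support_iff.mp hm), h] at this
    exact Nat.le_zero.mp this
  obtain ⟨m, hm⟩ := ne_zero_iff.mp hf0
  obtain rfl := hsupp m (mem_support_iff.mpr hm)
  exact hf (isUnit_iff_totalDegree_of_isReduced.mpr ⟨hm.isUnit,
    (totalDegree_eq_zero_iff _ _).mpr fun m hm v => by simp [hsupp m hm]⟩)

variable [Fintype I] {σ : Equiv.Perm I} {m : I × I →₀ ℕ}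

lemma weight_eq_sum_of_le_permMonomial (w : I × I → ℕ) (hm : m ≤ permMonomial σ) :
    Finsupp.weight w m = ∑ j, m (σ j, j) * w (σ j, j) := by
  conv_lhs => rw [eq_sum_single_of_le_permMonomial hm]
  simp [Finsupp.weight_apply, Finsupp.sum_single_index]

lemma weight_rowWeight_of_le_permMonomial (hm : m ≤ permMonomial σ) (j : I) :
    Finsupp.weight (rowWeight (σ j)) m = m (σ j, j) := by
  simp [weight_eq_sum_of_le_permMonomial _ hm, rowWeight]

lemma weight_colWeight_of_le_permMonomial (hm : m ≤ permMonomial σ) (j : I) :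
    Finsupp.weight (colWeight j) m = m (σ j, j) := by
  simp [weight_eq_sum_of_le_permMonomial _ hm, colWeight]

end RowColumnWeights

section Irreducibility

variable {I K : Type*} [Fintype I] [DecidableEq I] [Field K] {Z : I → I → Prop} [DecidableRel Z]

lemma isWeightedHomogeneous_rowWeight_det (i : I) :
    IsWeightedHomogeneous (rowWeight i) (patternMatrix K Z).det 1 := by
  intro m hm
  obtain ⟨σ, -, rfl⟩ := exists_perm_of_coeff_det_ne_zero Z hm
  simpa [permMonomial_apply] using
    weight_rowWeight_of_le_permMonomial (σ := σ) le_rfl (σ.symm i)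

lemma isWeightedHomogeneous_colWeight_det (j : I) :
    IsWeightedHomogeneous (colWeight j) (patternMatrix K Z).det 1 := by
  intro m hm
  obtain ⟨σ, -, rfl⟩ := exists_perm_of_coeff_det_ne_zero Z hm
  simpa [permMonomial_apply] using weight_colWeight_of_le_permMonomial (σ := σ) le_rfl j

lemma rowDegree_eq_colDegree {f g : MvPolynomial (I × I) K}
    (hfg : f * g = (patternMatrix K Z).det)
    {τ : Equiv.Perm I} (hτ : ∀ j, Z (τ j) j) {j : I} {a b : ℕ}
    (ha : IsWeightedHomogeneous (rowWeight (τ j)) f a)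
    (hb : IsWeightedHomogeneous (colWeight j) f b) : a = b := by
  classical
  have hmem : permMonomial τ ∈ (f * g).support :=
    mem_support_iff.mpr (hfg ▸ coeff_permMonomial_det_ne_zero Z hτ)
  obtain ⟨m, hm, m', -, hsum⟩ := mem_add.mp (support_mul f g hmem)
  have hle : m ≤ permMonomial τ := hsum ▸ le_self_add
  rw [← ha (mem_support_iff.mp hm), ← hb (mem_support_iff.mp hm),
    weight_rowWeight_of_le_permMonomial hle, weight_colWeight_of_le_permMonomial hle]

theorem irreducible_det_patternMatrix [Nonempty I] (hdet : (patternMatrix K Z).det ≠ 0)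
    (hZ : ¬ PartlyDecomposable Z) : Irreducible (patternMatrix K Z).det := by
  refine ⟨not_isUnit_det_of_map_eq_zero constantCoeff
    (patternMatrix_map_constantCoeff (K := K) Z), fun f g hfg => ?_⟩
  by_contra! ⟨hf, hg⟩
  have hf0 : f ≠ 0 := by rintro rfl; exact hdet (by rw [hfg, zero_mul])
  have hg0 : g ≠ 0 := by rintro rfl; exact hdet (by rw [hfg, mul_zero])
  have hrow : ∀ i, IsWeightedHomogeneous (rowWeight i) (f * g) 1 :=
    fun i => hfg ▸ isWeightedHomogeneous_rowWeight_det i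
  have hcol : ∀ j, IsWeightedHomogeneous (colWeight j) (f * g) 1 :=
    fun j => hfg ▸ isWeightedHomogeneous_colWeight_det j
  choose a b hab ha hb using fun i => (hrow i).exists_of_mul _ hf0 hg0
  choose c _ _ hc _ using fun j => (hcol j).exists_of_mul _ hf0 hg0
  obtain ⟨σ, hσ, -⟩ := exists_perm_of_coeff_det_ne_zero Z (ne_zero_iff.mp hdet).choose_spec
  have key : ∀ τ : Equiv.Perm I, (∀ j, Z (τ j) j) → ∀ j, a (τ j) = c j :=
    fun τ hτ j => rowDegree_eq_colDegree hfg.symm hτ (ha _) (hc j)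
  refine hZ ⟨({i | a i = 0} : Finset I), ({j | c j ≠ 0} : Finset I), ?_, ?_, ?_, ?_⟩
  · obtain ⟨i, hi⟩ := exists_ne_zero_of_isWeightedHomogeneous_rowWeight hg0 hg hb
    exact ⟨i, mem_filter.mpr ⟨mem_univ _, by have := hab i; omega⟩⟩
  · obtain ⟨i, hi⟩ := exists_ne_zero_of_isWeightedHomogeneous_rowWeight hf0 hf ha
    exact ⟨σ.symm i, by simpa [← key σ hσ] using hi⟩
  · rw [card_equiv (s := {j | c j ≠ 0}) (t := {i | a i ≠ 0}) σ fun j => by simp [key σ hσ],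
      card_filter_add_card_filter_not, card_univ]
  · intro r hr j hj hrj
    obtain ⟨τ, hτ, rfl⟩ := exists_perm_apply_eq_of_not_partlyDecomposable hZ hσ hrj
    simp only [mem_filter, mem_univ, true_and, key τ hτ] at hr hj
    exact hj hr

end Irreducibility

end FrobeniusKonig

open FrobeniusKonig in
/-- Theorem 1.8, Frobenius–König irreducibility criterion.
For a `k × k` matrix `M` over `ℚ[x_{ij}]` whose entries are the distinct indeterminates
`x_{ij}` on a zero pattern `Z` (and `0` elsewhere), with `det M ≠ 0`:
`det M` is irreducible iff `M` is combinatorially irreducible, i.e. there are no nonempty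
proper subsets `R`, `C` of the index set with `|R| + |C| = k` and `M r c = 0` for all
`r ∈ R`, `c ∈ C`. -/
theorem stmt_1 {I : Type} [Fintype I] [DecidableEq I] (k : ℕ) (hk : 1 ≤ k)
    (hcard : Fintype.card I = k) (Z : I → I → Prop) [DecidableRel Z]
    (M : Matrix I I (MvPolynomial (I × I) ℚ))
    (hM : ∀ i j, M i j = if Z i j then MvPolynomial.X (i, j) else 0)
    (hdet : M.det ≠ 0) :
    Irreducible M.det ↔
      ¬ ∃ R C : Finset I, R.Nonempty ∧ C.Nonempty ∧ R ≠ Finset.univ ∧ C ≠ Finset.univ ∧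
        R.card + C.card = k ∧ ∀ r ∈ R, ∀ c ∈ C, M r c = 0 := by
  subst hcard
  obtain rfl : M = patternMatrix ℚ Z := Matrix.ext hM
  constructor
  · rintro hirr ⟨R, C, hR, hC, -, -, hcard, hzero⟩
    exact not_irreducible_det_of_zero_block constantCoeff (patternMatrix_map_constantCoeff Z)
      hR hC hcard hzero hirr
  · intro hblock
    have : Nonempty I := Fintype.card_pos_iff.mp hk
    refine irreducible_det_patternMatrix hdet fun ⟨R, C, hR, hC, hcard, hzero⟩ => hblock
      ⟨R, C, hR, hC, ne_univ_of_card_add_card_eq hC hcard,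
        ne_univ_of_card_add_card_eq hR (by omega), hcard,
        fun r hr c hc => (patternMatrix_apply_eq_zero_iff Z).mpr (hzero r hr c hc)⟩
end

section
/- Let n ≥ 1 and let H be an (n+1)×(n+1) matrix over a commutative ring (rows and columns indexed by 0,…,n) whose self-coupling positions are exactly the superdiagonal positions (i, i+1) for i = 0,…,n−1 (so H has exactly one self-coupling in every row except the last and exactly one in every column except the first), and assume every self-coupling entry of H is nonzero. Suppose P and Q are (n+1)×(n+1) permutation matrices such that PHQ is block partitioned as [[A, B, C], [0, B_η, D], [0, 0, E]] with square diagonal blocks A, B_η, E (where A and/or E may have size 0), B_η of size k × k, and the indicated blocks below the diagonal identically zero. Then the number of self-coupling entries of H that appear in B_η is either k−1 or k. -/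
/-!
Locate each self-coupling by its row and column in the permuted matrix; both maps are injective.
Distinct self-couplings of `B_η` lie in distinct rows of the middle band, so there are at most `k`.
Conversely, every one of the `k + e` rows from `a` on except the output row carries a
self-coupling. Since the blocks below the diagonal vanish, its column is `≥ a`, and if its column
is `< a + k` then so is its row, i.e. it lies in `B_η`. At most `e` of them have a column
`≥ a + k`, so at least `k + e - 1 - e = k - 1` lie in `B_η`.
-/

open Finset

namespace Finset

variable {α β : Type*} [Fintype α] [Fintype β]

theorem card_filter_comp_le_of_injective {f : α → β} (hf : Function.Injective f)
    (p : β → Prop) [DecidablePred p] : #{x | p (f x)} ≤ #{y | p y} :=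
  card_le_card_of_injOn f (fun x hx => by simpa using hx) hf.injOn

theorem card_filter_le_card_filter_comp_add_one {f : α → β} {b₀ : β}
    (hf : ∀ b, b ≠ b₀ → b ∈ Set.range f) (p : β → Prop) [DecidablePred p] :
    #{y | p y} ≤ #{x | p (f x)} + 1 := by
  classical
  calc #{y | p y} ≤ #(insert b₀ (image f {x | p (f x)})) := by
        refine card_le_card fun y hy => ?_
        rcases eq_or_ne y b₀ with rfl | hne
        · exact mem_insert_self _ _
        · obtain ⟨x, rfl⟩ := hf y hne
          exact mem_insert_of_mem (mem_image_of_mem f (by simpa using hy))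
    _ ≤ #(image f {x | p (f x)}) + 1 := card_insert_le _ _
    _ ≤ #{x | p (f x)} + 1 := Nat.add_le_add_right card_image_le 1

end Finset

namespace Fin

theorem card_filter_le_val_and_val_lt (n a b : ℕ) :
    #{i : Fin n | a ≤ (i : ℕ) ∧ (i : ℕ) < b} = min n b - a := by
  rw [← Nat.card_Ico, ← card_map valEmbedding]
  congr 1
  ext x
  simp only [mem_map, mem_filter, mem_univ, true_and, valEmbedding_apply, exists_iff,
    exists_and_left, exists_prop, exists_eq_right_right, mem_Ico, lt_min_iff]
  omega

theorem card_filter_le_val (n a : ℕ) : #{i : Fin n | a ≤ (i : ℕ)} = n - a := by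
  have h := card_filter_add_card_filter_not (s := univ) fun i : Fin n => (i : ℕ) < a
  simp only [not_lt, card_filter_val_lt, card_univ, Fintype.card_fin] at h
  omega

theorem mem_range_symm_castSucc {α : Type*} {n : ℕ} (e : α ≃ Fin (n + 1)) {x : α}
    (hx : x ≠ e.symm (last n)) : x ∈ Set.range fun i : Fin n => e.symm i.castSucc := by
  obtain ⟨i, hi⟩ := exists_castSucc_eq.2 fun h => hx (e.eq_symm_apply.2 h)
  exact ⟨i, by simp [hi]⟩

end Fin

theorem stmt_2_general {R : Type*} [CommRing R] (n : ℕ)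
    (H : Matrix (Fin (n + 1)) (Fin (n + 1)) R)
    (hsc : ∀ i : Fin n, H i.castSucc i.succ ≠ 0)
    (σ τ : Equiv.Perm (Fin (n + 1))) (a k e : ℕ)
    (hake : a + k + e = n + 1)
    (hzero : ∀ r c : Fin (n + 1),
      ((a ≤ (r : ℕ) ∧ (c : ℕ) < a) ∨ (a + k ≤ (r : ℕ) ∧ (c : ℕ) < a + k)) →
      H (σ r) (τ c) = 0) :
    (Finset.univ.filter (fun i : Fin n =>
        a ≤ (σ.symm i.castSucc : ℕ) ∧ (σ.symm i.castSucc : ℕ) < a + k ∧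
        a ≤ (τ.symm i.succ : ℕ) ∧ (τ.symm i.succ : ℕ) < a + k)).card = k - 1 ∨
    (Finset.univ.filter (fun i : Fin n =>
        a ≤ (σ.symm i.castSucc : ℕ) ∧ (σ.symm i.castSucc : ℕ) < a + k ∧
        a ≤ (τ.symm i.succ : ℕ) ∧ (τ.symm i.succ : ℕ) < a + k)).card = k := by
  set ρ : Fin n → Fin (n + 1) := fun i => σ.symm i.castSucc
  set γ : Fin n → Fin (n + 1) := fun i => τ.symm i.succ
  set M : Finset (Fin n) := {i | a ≤ (ρ i : ℕ) ∧ (ρ i : ℕ) < a + k ∧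
    a ≤ (γ i : ℕ) ∧ (γ i : ℕ) < a + k}
  have hρ : Function.Injective ρ := σ.symm.injective.comp (Fin.castSucc_injective n)
  have hγ : Function.Injective γ := τ.symm.injective.comp (Fin.succ_injective n)
  have hnz (i : Fin n) : H (σ (ρ i)) (τ (γ i)) ≠ 0 := by simpa [ρ, γ] using hsc i
  have hcol₁ (i : Fin n) (h : a ≤ (ρ i : ℕ)) : a ≤ (γ i : ℕ) :=
    not_lt.1 fun h' => hnz i (hzero _ _ (.inl ⟨h, h'⟩))
  have hcol₂ (i : Fin n) (h : a + k ≤ (ρ i : ℕ)) : a + k ≤ (γ i : ℕ) :=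
    not_lt.1 fun h' => hnz i (hzero _ _ (.inr ⟨h, h'⟩))
  have hupper : #M ≤ k := calc
    #M ≤ #{i | a ≤ (ρ i : ℕ) ∧ (ρ i : ℕ) < a + k} :=
      card_le_card (monotone_filter_right _ fun _ _ h => ⟨h.1, h.2.1⟩)
    _ ≤ #{x : Fin (n + 1) | a ≤ (x : ℕ) ∧ (x : ℕ) < a + k} :=
      card_filter_comp_le_of_injective hρ fun x : Fin (n + 1) =>
        a ≤ (x : ℕ) ∧ (x : ℕ) < a + k
    _ = k := by rw [Fin.card_filter_le_val_and_val_lt]; omega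
  have hlower : k + e ≤ #M + e + 1 := calc
    k + e = #{x : Fin (n + 1) | a ≤ (x : ℕ)} := by rw [Fin.card_filter_le_val]; omega
    _ ≤ #{i | a ≤ (ρ i : ℕ)} + 1 :=
      card_filter_le_card_filter_comp_add_one (fun _ => Fin.mem_range_symm_castSucc σ) _
    _ ≤ #(M ∪ ({i | a + k ≤ (γ i : ℕ)} : Finset (Fin n))) + 1 := by
      refine Nat.add_le_add_right (card_le_card fun i hi => ?_) 1
      simp only [mem_filter, mem_univ, true_and, mem_union, M] at hi ⊢
      have hcol := hcol₁ i hi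
      have hrow := mt (hcol₂ i)
      omega
    _ ≤ #M + #{x : Fin (n + 1) | a + k ≤ (x : ℕ)} + 1 := by
      grw [card_union_le,
        card_filter_comp_le_of_injective hγ fun x : Fin (n + 1) => a + k ≤ (x : ℕ)]
    _ = #M + e + 1 := by rw [Fin.card_filter_le_val]; omega
  omega

/-- Theorem 4.5, combinatorial form.  The homeostasis matrix `H` has its
(nonzero) self-coupling entries exactly at the superdiagonal positions `(i, i+1)`.
If row and column permutations `σ`, `τ` bring `H` to block upper triangular form
`[[A,B,C],[0,B_η,D],[0,0,E]]` with square diagonal blocks of sizes `a`, `k`, `e`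
(the middle block `B_η` occupying rows and columns `a ≤ · < a + k` of the permuted matrix),
then the number of self-coupling entries of `H` appearing in `B_η` is `k - 1` or `k`. -/
theorem stmt_2 {R : Type*} [CommRing R] (n : ℕ) (hn : 1 ≤ n)
    (H : Matrix (Fin (n + 1)) (Fin (n + 1)) R)
    (hsc : ∀ i : Fin n, H i.castSucc i.succ ≠ 0)
    (σ τ : Equiv.Perm (Fin (n + 1))) (a k e : ℕ) (hk : 1 ≤ k)
    (hake : a + k + e = n + 1)
    (hzero : ∀ r c : Fin (n + 1),
      ((a ≤ (r : ℕ) ∧ (c : ℕ) < a) ∨ (a + k ≤ (r : ℕ) ∧ (c : ℕ) < a + k)) →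
      H (σ r) (τ c) = 0) :
    (Finset.univ.filter (fun i : Fin n =>
        a ≤ (σ.symm i.castSucc : ℕ) ∧ (σ.symm i.castSucc : ℕ) < a + k ∧
        a ≤ (τ.symm i.succ : ℕ) ∧ (τ.symm i.succ : ℕ) < a + k)).card = k - 1 ∨
    (Finset.univ.filter (fun i : Fin n =>
        a ≤ (σ.symm i.castSucc : ℕ) ∧ (σ.symm i.castSucc : ℕ) < a + k ∧
        a ≤ (τ.symm i.succ : ℕ) ∧ (τ.symm i.succ : ℕ) < a + k)).card = k :=
  stmt_2_general n H hsc σ τ a k e hake hzero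
end

section
/- Let G be a core input-output network on a finite node set V with input node ι and output node o, with generic homeostasis matrix H over R = MvPolynomial (V × V) ℚ. Let S₁, …, S_k be the ιo-simple paths of G, and for each i let C_i be the complementary subnetwork of S_i (the induced subnetwork on the nodes of V not on S_i) with generic Jacobian J_{C_i}. Then there exist signs ε₁, …, ε_k ∈ {1, −1} such that det(H) = Σ_{i=1}^{k} ε_i · F_{S_i} · det(J_{C_i}), where F_{S_i} denotes the product of the coupling variables x_{a,b} over the consecutive arrows a → b of the simple path S_i. Moreover, for each i and every ordered pair (a,b) with a ≠ b, the coupling variable x_{a,b} does not divide det(J_{C_i}) in R. -/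
open Classical MvPolynomial

/-- An input-output network: a digraph on node set `V` (`edge a b` means there is an
arrow `a → b`) with a distinguished input node `inp` and a distinct output node `out`. -/
structure IONetwork (V : Type) where
  edge : V → V → Prop
  inp : V
  out : V
  inp_ne_out : inp ≠ out

/-- A cycle: a list of nodes forming a directed path whose first and last nodes coincide. -/
def IsCycle {V : Type} (E : V → V → Prop) (p : List V) : Prop :=
  p.Chain' E ∧ 2 ≤ p.length ∧ p.head? = p.getLast?

/-- Reachability by a directed path all of whose nodes stay inside `W`. -/
def RestrictedReach {V : Type} (E : V → V → Prop) (W : Set V) (a b : V) : Prop :=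
  Relation.ReflTransGen (fun x y => E x y ∧ x ∈ W ∧ y ∈ W) a b

/-- `a` occurs strictly before `b` in the list `p` (both occurring in `p`). -/
def Before {V : Type} [DecidableEq V] (p : List V) (a b : V) : Prop :=
  a ∈ p ∧ b ∈ p ∧ p.idxOf a < p.idxOf b

namespace IONetwork

variable {V : Type}

/-- An ιo-simple path: a directed path from the input node to the output node
with pairwise distinct nodes. -/
def IsIOSimplePath (G : IONetwork V) (p : List V) : Prop :=
  p.Chain' G.edge ∧ p.head? = some G.inp ∧ p.getLast? = some G.out ∧ p.Nodup

/-- A core network: every node is downstream from the input node and upstream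
from the output node. -/
def IsCore (G : IONetwork V) : Prop :=
  ∀ v : V, Relation.ReflTransGen G.edge G.inp v ∧ Relation.ReflTransGen G.edge v G.out

/-- A simple node: a node lying on some ιo-simple path. -/
def SimpleNode (G : IONetwork V) (v : V) : Prop :=
  ∃ p, G.IsIOSimplePath p ∧ v ∈ p

/-- A super-simple node: a node lying on every ιo-simple path. -/
def SuperSimple (G : IONetwork V) (v : V) : Prop :=
  ∀ p, G.IsIOSimplePath p → v ∈ p

/-- Two super-simple nodes are adjacent (with `a` upstream of `b`) if every ιo-simple
path visits `a` strictly before `b` and no super-simple node occurs strictly between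
them on an ιo-simple path. -/
def SSAdjacent [DecidableEq V] (G : IONetwork V) (a b : V) : Prop :=
  G.SuperSimple a ∧ G.SuperSimple b ∧ a ≠ b ∧
  (∀ p, G.IsIOSimplePath p → Before p a b) ∧
  (∀ c, G.SuperSimple c → ∀ p, G.IsIOSimplePath p → ¬ (Before p a c ∧ Before p c b))

/-- The node `v` belongs to the super-simple subnetwork `L(a,b)` determined by adjacent
super-simple nodes `a`, `b`: either it is one of the endpoints or some ιo-simple path
visits `a`, `v`, `b` in that order. -/
def InL [DecidableEq V] (G : IONetwork V) (a b v : V) : Prop :=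
  v = a ∨ v = b ∨ ∃ p, G.IsIOSimplePath p ∧ Before p a v ∧ Before p v b

/-- An appendage path component: a strongly connected component of the appendage
subnetwork (the induced subnetwork on the nodes lying on no ιo-simple path). -/
def IsAppendagePathComponent (G : IONetwork V) (K : Set V) : Prop :=
  K.Nonempty ∧ (∀ v ∈ K, ¬ G.SimpleNode v) ∧
  (∀ a ∈ K, ∀ b ∈ K, RestrictedReach G.edge {v | ¬ G.SimpleNode v} a b) ∧
  (∀ v, ¬ G.SimpleNode v →
    (∃ a ∈ K, RestrictedReach G.edge {v | ¬ G.SimpleNode v} a v ∧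
              RestrictedReach G.edge {v | ¬ G.SimpleNode v} v a) → v ∈ K)

/-- The no-cycle condition for a set `K` of appendage nodes: no cycle of `G` contains
both a node of `K` and a simple node but no super-simple node. -/
def NoCycleCond (G : IONetwork V) (K : Set V) : Prop :=
  ¬ ∃ γ : List V, IsCycle G.edge γ ∧ (∃ v ∈ γ, v ∈ K) ∧
    (∃ v ∈ γ, G.SimpleNode v) ∧ (∀ v ∈ γ, ¬ G.SuperSimple v)

/-- The node set of the structural subnetwork `S_G`: all simple nodes together with all
nodes of cycle appendage path components (those violating the no-cycle condition). -/
def StructuralSet (G : IONetwork V) : Set V :=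
  {v | G.SimpleNode v ∨
    ∃ K : Set V, G.IsAppendagePathComponent K ∧ ¬ G.NoCycleCond K ∧ v ∈ K}

/-- The node set of the super-simple structural subnetwork `L'(a,b)`: the simple nodes of
`L(a,b)` together with all appendage nodes lying on a cycle of `G` containing a simple
node of `L(a,b)` but no super-simple node. -/
def LpSet [DecidableEq V] (G : IONetwork V) (a b : V) : Set V :=
  {v | G.InL a b v} ∪
  {v | ¬ G.SimpleNode v ∧ ∃ γ : List V, IsCycle G.edge γ ∧ v ∈ γ ∧
        (∃ w ∈ γ, G.InL a b w ∧ G.SimpleNode w) ∧ ∀ w ∈ γ, ¬ G.SuperSimple w}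

/-- The generic entry associated to the ordered pair of nodes `(c, r)` (source `c`,
target `r`): the coupling/self-coupling indeterminate `x_{c,r}` if `c = r` or there is
an arrow `c → r`, and `0` otherwise. -/
noncomputable def genEntry (G : IONetwork V) (c r : V) : MvPolynomial (V × V) ℚ :=
  if c = r ∨ G.edge c r then MvPolynomial.X (c, r) else 0

/-- The generic Jacobian of the induced subnetwork on `W` (rows = targets, columns =
sources). -/
noncomputable def genJac (G : IONetwork V) (W : Set V) :
    Matrix ↥W ↥W (MvPolynomial (V × V) ℚ) :=
  Matrix.of fun r c => G.genEntry c.1 r.1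

/-- The generic homeostasis matrix of `G`: the generic Jacobian on `V` with the row of
the input node and the column of the output node deleted. -/
noncomputable def genH (G : IONetwork V) :
    Matrix {v : V // v ≠ G.inp} {v : V // v ≠ G.out} (MvPolynomial (V × V) ℚ) :=
  Matrix.of fun r c => G.genEntry c.1 r.1

/-- The determinant of the generic homeostasis matrix of `G`, computed after fixing a
bijection `V∖{o} ≃ V∖{ι}`. -/
noncomputable def detH [Fintype V] (G : IONetwork V)
    (e : {v : V // v ≠ G.out} ≃ {v : V // v ≠ G.inp}) : MvPolynomial (V × V) ℚ :=
  Matrix.det (Matrix.of fun r c : {v : V // v ≠ G.out} => G.genH (e r) c)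

/-- The determinant of the generic homeostasis matrix of the induced input-output
subnetwork on `W` with input node `a` and output node `b`, computed after fixing a
bijection `W∖{b} ≃ W∖{a}`. -/
noncomputable def subDetH [Fintype V] (G : IONetwork V) (W : Set V) (a b : V)
    (e : {v : V // v ∈ W ∧ v ≠ b} ≃ {v : V // v ∈ W ∧ v ≠ a}) :
    MvPolynomial (V × V) ℚ :=
  Matrix.det (Matrix.of fun r c : {v : V // v ∈ W ∧ v ≠ b} =>
    G.genEntry c.1 (e r).1)

end IONetwork

/-- The product of the coupling indeterminates along the consecutive arrows of a path
(given as a list of nodes). -/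
noncomputable def pathProd {V : Type} (p : List V) : MvPolynomial (V × V) ℚ :=
  ((p.zip p.tail).map fun ab => MvPolynomial.X ab).prod

/-!
A bijection `V ∖ {o} → V ∖ {ι}` is the same as a permutation `τ` of `V` with `τ o = ι`. The
cycle of `τ` through `ι`, read off by `Perm.toList`, is a list `q` of distinct nodes from `ι`
to `o`, and `τ = q.formPerm * π` for a permutation `π` of the complement of `q`. Grouping the
Leibniz expansion of `det H` by `q`, the terms of `q` add up to
`± (∏ of the Jacobian entries along q) * det J_{C_q}`; the product vanishes unless `q` is an
ιo-simple path, where it is `F_q`. Finally, no `x_{a,b}` with `a ≠ b` divides `det J_C`, since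
substituting `x_{a,b} = δ_{ab}` sends `det J_C` to `1`.
-/

open Equiv Equiv.Perm Finset

namespace List

variable {α : Type*}

theorem Nodup.mem_dropLast_iff {l : List α} {x a : α} (hl : l.Nodup)
    (hx : l.getLast? = some x) : a ∈ l.dropLast ↔ a ∈ l ∧ a ≠ x := by
  have hsplit := dropLast_append_getLast? x hx
  have hne : ∀ b ∈ l.dropLast, b ≠ x := fun b hb =>
    (nodup_append.1 (hsplit.symm ▸ hl : (l.dropLast ++ [x]).Nodup)).2.2 b hb x
      (mem_singleton_self x)
  refine ⟨fun h => ⟨dropLast_subset _ h, hne a h⟩, fun ⟨h, hax⟩ => ?_⟩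
  rw [← hsplit] at h
  simpa [hax] using h

theorem two_le_length_of_head?_of_getLast? {l : List α} {x y : α} (hx : l.head? = some x)
    (hy : l.getLast? = some y) (hxy : x ≠ y) : 2 ≤ l.length := by
  obtain ⟨xs, rfl⟩ := head?_eq_some_iff.1 hx
  cases xs with
  | nil => simp_all
  | cons => simp

variable [DecidableEq α]

theorem zip_tail_eq_map_formPerm {l : List α} (hl : l.Nodup) :
    l.zip l.tail = l.dropLast.map fun a => (a, l.formPerm a) := by
  refine ext_getElem (by simp) fun i h₁ h₂ => ?_
  simp only [length_map, length_dropLast] at h₂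
  simp [getElem_zip, formPerm_apply_getElem _ hl, Nat.mod_eq_of_lt (by omega : i + 1 < l.length)]

theorem formPerm_apply_of_head?_of_getLast? {l : List α} {x y : α} (hx : l.head? = some x)
    (hy : l.getLast? = some y) : l.formPerm y = x := by
  obtain ⟨xs, rfl⟩ := head?_eq_some_iff.1 hx
  rw [getLast?_eq_some_getLast (cons_ne_nil _ _), Option.some_inj] at hy
  rw [← hy, formPerm_apply_getLast]

end List

namespace Equiv.Perm

variable {α : Type*} [Fintype α] [DecidableEq α]

theorem sum_mul_ofSubtype {M : Type*} [AddCommMonoid M] (p : α → Prop) [DecidablePred p]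
    (κ : Perm α) (f : Perm α → M) :
    ∑ π : Perm (Subtype p), f (κ * ofSubtype π) =
      ∑ τ ∈ univ.filter (fun τ : Perm α => ∀ a, ¬ p a → τ a = κ a), f τ := by
  refine sum_bij (fun π _ => κ * ofSubtype π) (fun π _ => ?_) (fun π₁ _ π₂ _ h => ?_)
    (fun τ hτ => ?_) (fun _ _ => rfl)
  · simp only [mem_filter, mem_univ, true_and, mul_apply]
    exact fun a ha => congrArg κ (ofSubtype_apply_of_not_mem π ha)
  · exact ofSubtype_injective (mul_left_cancel h)
  · have hfix : ∀ a, ¬ p a → (κ⁻¹ * τ) a = a := fun a ha => by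
      simp only [mem_filter, mem_univ, true_and] at hτ
      simp [hτ a ha]
    refine ⟨(Perm.subtypeEquivSubtypePerm p).symm ⟨κ⁻¹ * τ, hfix⟩, mem_univ _, ?_⟩
    rw [← subtypeEquivSubtypePerm_apply_coe, apply_symm_apply, mul_inv_cancel_left]

theorem toList_cycleOf (f : Perm α) (x : α) : toList (f.cycleOf x) x = toList f x := by
  by_cases hx : f x = x
  · rw [(cycleOf_eq_one_iff f).2 hx, toList_one, toList_eq_nil_iff.2 (notMem_support.2 hx)]
  · refine List.ext_getElem ?_ fun n _ _ => ?_
    · rw [length_toList, length_toList, (isCycle_cycleOf f hx).cycleOf_eq (by simpa using hx)]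
    · rw [getElem_toList, getElem_toList, cycleOf_pow_apply_self]

theorem toList_eq_iff_forall_mem_formPerm {τ : Perm α} {l : List α} {x : α} (hl : l.Nodup)
    (h2 : 2 ≤ l.length) (hx : l.head? = some x) :
    toList τ x = l ↔ ∀ a ∈ l, τ a = l.formPerm a := by
  obtain ⟨xs, rfl⟩ := List.head?_eq_some_iff.1 hx
  refine ⟨fun h a ha => ?_, fun h => ?_⟩
  · rw [← h] at ha ⊢
    rw [formPerm_toList, (mem_toList_iff.1 ha).1.cycleOf_apply]
  · set l := x :: xs
    have hfix : ∀ a ∈ l, (l.formPerm⁻¹ * τ) a = a := fun a ha => by simp [h a ha]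
    have hdisj : l.formPerm.Disjoint (l.formPerm⁻¹ * τ) := fun a => by
      by_cases ha : a ∈ l
      · exact Or.inr (hfix a ha)
      · exact Or.inl (List.formPerm_apply_of_notMem ha)
    have hx : x ∈ l := List.mem_cons_self
    have hcyc : τ.cycleOf x = l.formPerm := by
      conv_lhs => rw [← mul_inv_cancel_left l.formPerm τ]
      rw [hdisj.cycleOf_mul_distrib, (cycleOf_eq_one_iff _).2 (hfix _ hx), mul_one,
        (List.isCycle_formPerm hl h2).cycleOf_eq
          ((List.formPerm_apply_mem_ne_self_iff _ hl _ hx).2 h2)]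
    rw [← toList_cycleOf, hcyc]
    exact toList_formPerm_nontrivial l h2 hl

theorem head?_toList {τ : Perm α} {x : α} (hx : τ x ≠ x) : (toList τ x).head? = some x := by
  rw [List.head?_eq_getElem?, List.getElem?_eq_getElem (length_toList_pos_of_mem_support _ _
    (mem_support.2 hx)), toList_getElem_zero τ x (mem_support.2 hx)]

theorem getLast?_toList {τ : Perm α} {x : α} (hx : τ x ≠ x) :
    (toList τ x).getLast? = some (τ⁻¹ x) := by
  obtain ⟨xs, hxs⟩ := List.head?_eq_some_iff.1 (head?_toList hx)
  set y := (x :: xs).getLast (List.cons_ne_nil _ _) with hy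
  have hmem : y ∈ toList τ x := hxs ▸ List.getLast_mem _
  have hτy : τ y = x := by
    rw [← (mem_toList_iff.1 hmem).1.cycleOf_apply, ← formPerm_toList, hxs, hy,
      List.formPerm_apply_getLast]
  rw [hxs, List.getLast?_eq_some_getLast (List.cons_ne_nil _ _), ← hy, ← hτy]
  simp

end Equiv.Perm

namespace IONetwork

variable {V : Type}

/-- Unlike `pathProd`, this vanishes on lists that do not follow the arrows of `G`. -/
noncomputable def pathWeight (G : IONetwork V) (q : List V) : MvPolynomial (V × V) ℚ :=
  ((q.zip q.tail).map fun ab => G.genEntry ab.1 ab.2).prod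

/-- The term `∏_{c ≠ o} J_{τ c, c}` of `det H` belonging to the bijection
`V ∖ {o} → V ∖ {ι}` induced by a permutation `τ` with `τ o = ι`. -/
noncomputable def permTerm [Fintype V] [DecidableEq V] (G : IONetwork V) (τ : Perm V) :
    MvPolynomial (V × V) ℚ :=
  ∏ c ∈ univ.erase G.out, G.genEntry c (τ c)

variable {G : IONetwork V}

theorem pathWeight_eq_pathProd {q : List V} (hq : q.IsChain G.edge) :
    G.pathWeight q = pathProd q := by
  refine congrArg List.prod (List.map_congr_left fun ab hab => ?_)
  obtain ⟨i, hi, rfl⟩ := List.mem_iff_getElem.1 hab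
  simp only [List.length_zip, List.length_tail] at hi
  have hedge := List.isChain_iff_getElem.1 hq i (by omega)
  simp [genEntry, List.getElem_zip, hedge]

theorem pathWeight_eq_zero {q : List V} (hq : q.Nodup) (hc : ¬ q.IsChain G.edge) :
    G.pathWeight q = 0 := by
  rw [List.isChain_iff_getElem] at hc
  push Not at hc
  obtain ⟨i, hi, hne⟩ := hc
  have hdiff : q[i] ≠ q[i + 1] := fun h => by simpa using hq.getElem_inj_iff.1 h
  refine List.prod_eq_zero (List.mem_map.2 ⟨(q[i], q[i + 1]), ?_, ?_⟩)
  · exact List.mem_iff_getElem.2 ⟨i, by simp; omega, by simp [List.getElem_zip]⟩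
  · simp [genEntry, hdiff, hne]

variable [DecidableEq V]

theorem not_X_dvd_det_genJac (W : Set V) [Fintype W] {a b : V} (hab : a ≠ b) :
    ¬ X (a, b) ∣ (G.genJac W).det := by
  rintro ⟨t, ht⟩
  let δ : V × V → ℚ := fun s => if s.1 = s.2 then 1 else 0
  have hdet : eval δ (G.genJac W).det = 1 := by
    rw [RingHom.map_det, ← Matrix.det_one (n := W) (R := ℚ)]
    congr 1
    ext r c
    by_cases h : r = c
    · subst h
      simp [genJac, genEntry, δ]
    · have h' : (c : V) ≠ r := fun h' => h (Subtype.ext h'.symm)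
      simp [genJac, genEntry, δ, h, h', apply_ite]
  have := congrArg (eval δ) ht
  simp [hdet, δ, hab] at this

variable [Fintype V]

theorem detH_eq_sign_smul_sum (e : {v : V // v ≠ G.out} ≃ {v : V // v ≠ G.inp}) :
    G.detH e = sign e.extendSubtype •
      ∑ τ ∈ univ.filter (fun τ : Perm V => τ G.out = G.inp), sign τ • G.permTerm τ := by
  set κ := e.extendSubtype
  have hκ (σ : Perm {v // v ≠ G.out}) (c : {v // v ≠ G.out}) :
      (κ * ofSubtype σ) c = e (σ c) := by
    rw [mul_apply, ofSubtype_apply_coe, e.extendSubtype_apply_of_mem _ (σ c).2]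
  have hκout : κ G.out = G.inp := by
    simpa using e.extendSubtype_not_mem G.out (by simp)
  have hfilter : univ.filter (fun τ : Perm V => τ G.out = G.inp) =
      univ.filter (fun τ : Perm V => ∀ a, ¬ a ≠ G.out → τ a = κ a) :=
    filter_congr fun τ _ => by simp [hκout]
  rw [hfilter, ← sum_mul_ofSubtype (· ≠ G.out) κ, smul_sum,
    show G.detH e = (Matrix.of fun r c => G.genH (e r) c).det by unfold detH; congr!,
    Matrix.det_apply]
  refine sum_congr rfl fun σ _ => ?_
  rw [Perm.sign_mul, sign_ofSubtype, smul_smul, ← mul_assoc, Int.units_mul_self, one_mul,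
    permTerm, prod_subtype (p := (· ≠ G.out)) _ (by simp)]
  exact congrArg _ (prod_congr rfl fun c _ => by simp [genH, hκ])

theorem permTerm_formPerm_mul_ofSubtype {q : List V} (hq : q.Nodup)
    (hlast : q.getLast? = some G.out) (π : Perm ↥{v | v ∉ q}) :
    G.permTerm (q.formPerm * ofSubtype π) =
      G.pathWeight q * ∏ w : ↥{v | v ∉ q}, G.genEntry w (π w) := by
  rw [permTerm, ← prod_filter_mul_prod_filter_not (univ.erase G.out) (· ∈ q)]
  congr 1
  · have hpath : (univ.erase G.out).filter (· ∈ q) = q.dropLast.toFinset := by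
      ext a
      simp [hq.mem_dropLast_iff hlast, and_comm]
    rw [hpath, prod_congr rfl fun c hc => by
      rw [mul_apply, ofSubtype_apply_of_not_mem π (by
        simpa using List.dropLast_subset _ (List.mem_toFinset.1 hc))],
      List.prod_toFinset _ (hq.sublist (List.dropLast_sublist _)), pathWeight,
      List.zip_tail_eq_map_formPerm hq, List.map_map]
    rfl
  · have hout : G.out ∈ q := List.mem_of_getLast? hlast
    rw [prod_subtype _ (p := (· ∈ {v | v ∉ q})) fun a => by
      simp only [mem_filter, mem_erase, mem_univ, Set.mem_ofPred_eq]; grind]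
    refine prod_congr rfl fun w _ => ?_
    rw [mul_apply, ofSubtype_apply_coe, List.formPerm_apply_of_notMem (π w).2]

theorem toList_inp_nodup_head?_getLast? {τ : Perm V} (hτ : τ G.out = G.inp) :
    (toList τ G.inp).Nodup ∧ (toList τ G.inp).head? = some G.inp ∧
      (toList τ G.inp).getLast? = some G.out := by
  have hmoved : τ G.inp ≠ G.inp := fun h => G.inp_ne_out (τ.injective (h.trans hτ.symm))
  refine ⟨nodup_toList τ _, head?_toList hmoved, ?_⟩
  rw [getLast?_toList hmoved, ← hτ]
  simp

theorem sum_toList_inp_eq {q : List V} (hq : q.Nodup) (hhead : q.head? = some G.inp)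
    (hlast : q.getLast? = some G.out) :
    ∑ τ ∈ univ.filter (fun τ : Perm V => τ G.out = G.inp) with toList τ G.inp = q,
        sign τ • G.permTerm τ =
      sign q.formPerm • (G.pathWeight q * (G.genJac {v | v ∉ q}).det) := by
  have h2 := List.two_le_length_of_head?_of_getLast? hhead hlast G.inp_ne_out
  have hout : G.out ∈ q := List.mem_of_getLast? hlast
  have hfiber : (univ.filter fun τ : Perm V => τ G.out = G.inp).filter
      (fun τ => toList τ G.inp = q) =
      univ.filter fun τ : Perm V =>
        ∀ a, a ∉ ({v | v ∉ q} : Set V) → τ a = q.formPerm a := by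
    ext τ
    simp only [mem_filter, mem_univ, true_and, Set.mem_ofPred_eq, not_not,
      toList_eq_iff_forall_mem_formPerm hq h2 hhead]
    refine ⟨fun h => h.2, fun h => ⟨?_, h⟩⟩
    rw [h _ hout, List.formPerm_apply_of_head?_of_getLast? hhead hlast]
  rw [filter_filter, ← filter_filter, hfiber, ← sum_mul_ofSubtype, Matrix.det_apply, mul_sum,
    smul_sum]
  refine sum_congr rfl fun π _ => ?_
  rw [Perm.sign_mul, sign_ofSubtype, permTerm_formPerm_mul_ofSubtype hq hlast, mul_smul,
    mul_smul_comm]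
  rfl

theorem sum_permTerm_eq_sum_paths {P : Finset (List V)}
    (hP : ∀ p, p ∈ P ↔ G.IsIOSimplePath p) :
    ∑ τ ∈ univ.filter (fun τ : Perm V => τ G.out = G.inp), sign τ • G.permTerm τ =
      ∑ p ∈ P, sign p.formPerm • (pathProd p * (G.genJac {v | v ∉ p}).det) := by
  set S := univ.filter fun τ : Perm V => τ G.out = G.inp
  set T := S.image (toList · G.inp)
  have hT : ∀ q ∈ T, q.Nodup ∧ q.head? = some G.inp ∧ q.getLast? = some G.out := by
    simp only [T, S, mem_image, mem_filter, mem_univ, true_and]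
    rintro _ ⟨τ, hτ, rfl⟩
    exact toList_inp_nodup_head?_getLast? hτ
  have hPT : P ⊆ T := fun p hp => by
    obtain ⟨-, hhead, hlast, hnodup⟩ := (hP p).1 hp
    refine mem_image.2 ⟨p.formPerm, ?_, ?_⟩
    · simpa [S] using List.formPerm_apply_of_head?_of_getLast? hhead hlast
    · exact (toList_eq_iff_forall_mem_formPerm hnodup
        (List.two_le_length_of_head?_of_getLast? hhead hlast G.inp_ne_out) hhead).2
        fun _ _ => rfl
  rw [← sum_fiberwise_of_maps_to (t := T) fun τ hτ => mem_image_of_mem _ hτ,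
    sum_congr rfl fun q hq => sum_toList_inp_eq (hT q hq).1 (hT q hq).2.1 (hT q hq).2.2]
  refine (sum_subset_zero_on_sdiff hPT (fun q hq => ?_) fun p hp => ?_).symm
  · obtain ⟨hqT, hqP⟩ := mem_sdiff.1 hq
    obtain ⟨hnodup, hhead, hlast⟩ := hT q hqT
    rw [pathWeight_eq_zero hnodup fun hc => hqP ((hP q).2 ⟨hc, hhead, hlast, hnodup⟩),
      zero_mul, smul_zero]
  · rw [pathWeight_eq_pathProd ((hP p).1 hp).1]

end IONetwork

theorem stmt_4_general {V : Type} [Fintype V] [DecidableEq V] (G : IONetwork V)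
    (e : {v : V // v ≠ G.out} ≃ {v : V // v ≠ G.inp})
    (P : Finset (List V)) (hP : ∀ p, p ∈ P ↔ G.IsIOSimplePath p) :
    (∃ ε : List V → MvPolynomial (V × V) ℚ,
      (∀ p ∈ P, ε p = 1 ∨ ε p = -1) ∧
      G.detH e = ∑ p ∈ P, ε p * pathProd p * (G.genJac {v | v ∉ p}).det) ∧
    (∀ p ∈ P, ∀ a b : V, a ≠ b →
      ¬ (MvPolynomial.X (a, b) ∣ (G.genJac {v | v ∉ p}).det)) := by
  let ε : List V → MvPolynomial (V × V) ℚ := fun q =>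
    ((sign e.extendSubtype * sign q.formPerm : ℤˣ) : ℤ)
  refine ⟨⟨ε, fun p _ => ?_, ?_⟩, fun p _ a b hab => IONetwork.not_X_dvd_det_genJac _ hab⟩
  · rcases Int.units_eq_one_or (sign e.extendSubtype * sign p.formPerm) with h | h <;>
      simp only [ε, h] <;> simp
  · rw [IONetwork.detH_eq_sign_smul_sum, IONetwork.sum_permTerm_eq_sum_paths hP, smul_sum]
    refine sum_congr rfl fun p _ => ?_
    rw [smul_smul, Units.smul_def, zsmul_eq_mul, mul_assoc]

/-- Theorem 3.2, the determinant formula.  `det H` is a signed sum,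
over the ιo-simple paths `S` of `G`, of the product `F_S` of the coupling variables
along `S` times the determinant of the generic Jacobian of the complementary
subnetwork `C_S`; moreover no coupling variable divides `det J_{C_S}`. -/
theorem stmt_4 {V : Type} [Fintype V] [DecidableEq V] (G : IONetwork V)
    (hcore : G.IsCore)
    (e : {v : V // v ≠ G.out} ≃ {v : V // v ≠ G.inp})
    (P : Finset (List V)) (hP : ∀ p, p ∈ P ↔ G.IsIOSimplePath p) :
    (∃ ε : List V → MvPolynomial (V × V) ℚ,
      (∀ p ∈ P, ε p = 1 ∨ ε p = -1) ∧
      G.detH e = ∑ p ∈ P, ε p * pathProd p * (G.genJac {v | v ∉ p}).det) ∧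
    (∀ p ∈ P, ∀ a b : V, a ≠ b →
      ¬ (MvPolynomial.X (a, b) ∣ (G.genJac {v | v ∉ p}).det)) :=
  stmt_4_general G e P hP
end

section
/- Let G₁ and G₂ be core input-output networks on the same finite node set V with the same input node ι and output node o, and suppose their arrow relations E₁, E₂ agree except possibly on backward arrows, i.e., for all nodes a, b with b ≠ ι and a ≠ o one has E₁ a b ↔ E₂ a b. Then the generic homeostasis matrices of G₁ and G₂ are equal as matrices over R = MvPolynomial (V × V) ℚ; in particular det(H₁) = det(H₂), so G₁ and G₂ are core equivalent. -/
open Classical MvPolynomial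

namespace IONetwork

variable {V : Type} {E₁ E₂ : V → V → Prop} {ι o : V} {hne : ι ≠ o}

-- A backward arrow `a → ι` or `o → b` would sit in the deleted row of `ι` or column of `o`.
theorem genH_eq_of_edge_iff (hback : ∀ a b : V, b ≠ ι → a ≠ o → (E₁ a b ↔ E₂ a b)) :
    (mk E₁ ι o hne).genH = (mk E₂ ι o hne).genH := by
  ext r c
  simp only [genH, genEntry, Matrix.of_apply, hback c.1 r.1 r.2 c.2]

theorem detH_eq_of_genH_eq [Fintype V] (hH : (mk E₁ ι o hne).genH = (mk E₂ ι o hne).genH)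
    (e : {v : V // v ≠ o} ≃ {v : V // v ≠ ι}) :
    (mk E₁ ι o hne).detH e = (mk E₂ ι o hne).detH e := by
  simp only [detH, hH]

end IONetwork

theorem stmt_6_general {V : Type} [Fintype V]
    (E₁ E₂ : V → V → Prop) (ι o : V) (hne : ι ≠ o)
    (hback : ∀ a b : V, b ≠ ι → a ≠ o → (E₁ a b ↔ E₂ a b)) :
    (IONetwork.mk E₁ ι o hne).genH = (IONetwork.mk E₂ ι o hne).genH ∧
    ∀ e : {v : V // v ≠ o} ≃ {v : V // v ≠ ι},
      (IONetwork.mk E₁ ι o hne).detH e = (IONetwork.mk E₂ ι o hne).detH e :=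
  have hH := IONetwork.genH_eq_of_edge_iff hback
  ⟨hH, IONetwork.detH_eq_of_genH_eq hH⟩

/-- Corollary 1.6.  If two core networks on the same node set, input
and output differ only in backward arrows (arrows into the input node or out of the
output node), then their generic homeostasis matrices are equal, and in particular their
determinants are equal, so the networks are core equivalent. -/
theorem stmt_6 {V : Type} [Fintype V] [DecidableEq V]
    (E₁ E₂ : V → V → Prop) (ι o : V) (hne : ι ≠ o)
    (hcore₁ : (IONetwork.mk E₁ ι o hne).IsCore)
    (hcore₂ : (IONetwork.mk E₂ ι o hne).IsCore)
    (hback : ∀ a b : V, b ≠ ι → a ≠ o → (E₁ a b ↔ E₂ a b)) :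
    (IONetwork.mk E₁ ι o hne).genH = (IONetwork.mk E₂ ι o hne).genH ∧
    ∀ e : {v : V // v ≠ o} ≃ {v : V // v ≠ ι},
      (IONetwork.mk E₁ ι o hne).detH e = (IONetwork.mk E₂ ι o hne).detH e :=
  stmt_6_general E₁ E₂ ι o hne hback
end

section
/- Let G be a core input-output network and let ρ be a simple node of G that is not super-simple. Then there exists a unique pair (ρ₁, ρ₂) of adjacent super-simple nodes such that every ιo-simple path of G that contains ρ visits ρ₁, then ρ, then ρ₂ in that order (with ρ strictly between ρ₁ and ρ₂). -/
open Classical MvPolynomial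

/-!
The relative order of a super-simple node `b` and any other node `x` is the same on every
ιo-simple path: if `x` precedes `b` on `p` while `b` precedes `x` on `q`, then following `p` up
to `x` and `q` from `x` on gives an ιo-walk avoiding `b`, which shortens to an ιo-simple path
missing `b`. So, on one ιo-simple path through `ρ`, the last super-simple node before `ρ` and
the first one after `ρ` stay on either side of `ρ` on every ιo-simple path, are adjacent, and
are the only adjacent pair around `ρ`.
-/

theorem List.IsChain.exists_nodup_subset {α : Type*} {R : α → α → Prop} {l : List α}
    (hl : l.IsChain R) :
    ∃ s : List α, s.IsChain R ∧ s.head? = l.head? ∧ s.getLast? = l.getLast? ∧ s.Nodup ∧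
      s ⊆ l := by
  induction l with
  | nil => exact ⟨[], .nil, rfl, rfl, List.nodup_nil, List.Subset.refl _⟩
  | cons a t ih =>
    obtain ⟨hat, ht⟩ := List.isChain_cons.mp hl
    obtain ⟨s, hs, hhead, hlast, hnd, hsub⟩ := ih ht
    by_cases ha : a ∈ s
    · refine ⟨s.drop (s.idxOf a), hs.drop _, ?_, ?_, hnd.sublist (List.drop_sublist _ _),
        fun v hv => List.mem_cons_of_mem _ (hsub (List.mem_of_mem_drop hv))⟩
      · simp [List.head?_drop, List.getElem?_idxOf ha]
      · rw [List.getLast?_drop, if_neg (not_le.mpr (List.idxOf_lt_length_of_mem ha)), hlast]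
        obtain ⟨b, t, rfl⟩ := List.exists_cons_of_ne_nil (List.ne_nil_of_mem (hsub ha))
        simp
    · refine ⟨a :: s, List.isChain_cons.mpr ⟨by rwa [hhead], hs⟩, rfl, ?_,
        List.nodup_cons.mpr ⟨ha, hnd⟩, List.cons_subset_cons _ hsub⟩
      simp [List.getLast?_cons, hlast]

theorem List.drop_idxOf_of_mem {α : Type*} [DecidableEq α] {l : List α} {x : α} (hx : x ∈ l) :
    l.drop (l.idxOf x) = x :: l.drop (l.idxOf x + 1) := by
  rw [List.drop_eq_getElem_cons (List.idxOf_lt_length_of_mem hx), List.getElem_idxOf]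

section Before

variable {α : Type} [DecidableEq α] {l : List α} {a b c : α}

theorem Before.ne (h : Before l a b) : a ≠ b := by
  rintro rfl
  exact lt_irrefl _ h.2.2

theorem Before.trans (hab : Before l a b) (hbc : Before l b c) : Before l a c :=
  ⟨hab.1, hbc.2.1, hab.2.2.trans hbc.2.2⟩

theorem before_or_before (ha : a ∈ l) (hb : b ∈ l) (hab : a ≠ b) :
    Before l a b ∨ Before l b a := by
  have hidx : l.idxOf a ≠ l.idxOf b := fun h => hab ((List.idxOf_inj ha).mp h)
  rcases hidx.lt_or_gt with h | h
  · exact .inl ⟨ha, hb, h⟩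
  · exact .inr ⟨hb, ha, h⟩

theorem exists_last_before {P : α → Prop} (h : ∃ c, P c ∧ Before l c b) :
    ∃ a, P a ∧ Before l a b ∧ ∀ c, P c → Before l c b → ¬ Before l a c := by
  obtain ⟨a, ha, hmax⟩ := Finset.exists_max_image
    (l.toFinset.filter fun c => P c ∧ Before l c b) l.idxOf
    (by simpa [Finset.Nonempty] using h.imp fun c hc => ⟨hc.2.1, hc⟩)
  simp only [Finset.mem_filter, List.mem_toFinset] at ha hmax
  exact ⟨a, ha.2.1, ha.2.2, fun c hc hcb hac =>
    (hmax c ⟨hac.2.1, hc, hcb⟩).not_gt hac.2.2⟩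

theorem exists_first_after {P : α → Prop} (h : ∃ c, P c ∧ Before l a c) :
    ∃ b, P b ∧ Before l a b ∧ ∀ c, P c → Before l a c → ¬ Before l c b := by
  obtain ⟨b, hb, hmin⟩ := Finset.exists_min_image
    (l.toFinset.filter fun c => P c ∧ Before l a c) l.idxOf
    (by simpa [Finset.Nonempty] using h.imp fun c hc => ⟨hc.2.2.1, hc⟩)
  simp only [Finset.mem_filter, List.mem_toFinset] at hb hmin
  exact ⟨b, hb.2.1, hb.2.2, fun c hc hac hcb =>
    (hmin c ⟨hcb.1, hc, hac⟩).not_gt hcb.2.2⟩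

end Before

namespace IONetwork

variable {V : Type} {G : IONetwork V}

theorem superSimple_inp (G : IONetwork V) : G.SuperSimple G.inp := fun _ hp =>
  List.mem_of_mem_head? hp.2.1

theorem superSimple_out (G : IONetwork V) : G.SuperSimple G.out := fun _ hp =>
  List.mem_of_getLast? hp.2.2.1

theorem IsIOSimplePath.exists_subset_splice {p₁ p₂ q₁ q₂ : List V} {x : V}
    (hp : G.IsIOSimplePath (p₁ ++ x :: p₂)) (hq : G.IsIOSimplePath (q₁ ++ x :: q₂)) :
    ∃ s, G.IsIOSimplePath s ∧ s ⊆ p₁ ++ x :: q₂ := by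
  have hpc : (p₁ ++ x :: p₂).IsChain G.edge := hp.1
  rw [← List.singleton_append, ← List.append_assoc] at hpc
  have hchain : (p₁ ++ [x] ++ q₂).IsChain G.edge :=
    hpc.left_of_append.append_overlap (List.IsChain.right_of_append (l₁ := q₁) hq.1)
      (List.cons_ne_nil _ _)
  obtain ⟨s, hs, hhead, hlast, hnd, hsub⟩ := hchain.exists_nodup_subset
  refine ⟨s, ⟨hs, ?_, ?_, hnd⟩, by simpa using hsub⟩
  · rw [hhead, ← hp.2.1]
    simp [List.head?_append]
  · rw [hlast, ← hq.2.2.1]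
    simp [List.getLast?_append, List.getLast?_cons]

variable [DecidableEq V] {p q : List V} {x b : V}

theorem IsIOSimplePath.inp_before (hp : G.IsIOSimplePath p) (hx : x ∈ p) (hne : x ≠ G.inp) :
    Before p G.inp x := by
  obtain ⟨t, rfl⟩ : ∃ t, p = G.inp :: t := List.head?_eq_some_iff.mp hp.2.1
  exact ⟨List.mem_cons_self, hx, by simp [List.idxOf_cons_ne _ (Ne.symm hne)]⟩

theorem IsIOSimplePath.before_out (hp : G.IsIOSimplePath p) (hx : x ∈ p) (hne : x ≠ G.out) :
    Before p x G.out := by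
  obtain ⟨t, rfl⟩ : ∃ t, p = t ++ [G.out] := List.getLast?_eq_some_iff.mp hp.2.2.1
  have hout : G.out ∉ t := fun h =>
    (List.nodup_append.mp hp.2.2.2).2.2 _ h _ (List.mem_singleton_self _) rfl
  have hxt : x ∈ t := by simpa [hne] using hx
  refine ⟨hx, by simp, ?_⟩
  rw [List.idxOf_append_of_mem hxt, List.idxOf_append_of_notMem hout]
  simpa using List.idxOf_lt_length_of_mem hxt

theorem SuperSimple.not_before_of_before (hb : G.SuperSimple b) (hp : G.IsIOSimplePath p)
    (hq : G.IsIOSimplePath q) (hxb : Before p x b) : ¬ Before q b x := by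
  intro hbx
  have hp' : G.IsIOSimplePath (p.take (p.idxOf x) ++ x :: p.drop (p.idxOf x + 1)) := by
    rwa [← List.drop_idxOf_of_mem hxb.1, List.take_append_drop]
  have hq' : G.IsIOSimplePath (q.take (q.idxOf x) ++ x :: q.drop (q.idxOf x + 1)) := by
    rwa [← List.drop_idxOf_of_mem hbx.2.1, List.take_append_drop]
  obtain ⟨s, hs, hsub⟩ := hp'.exists_subset_splice hq'
  have hb_take : b ∉ p.take (p.idxOf x) := fun hm =>
    ((List.mem_take_iff_idxOf_lt hxb.2.1).mp hm).not_gt hxb.2.2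
  have hb_drop : b ∉ x :: q.drop (q.idxOf x + 1) := by
    rw [← List.drop_idxOf_of_mem hbx.2.1]
    exact List.disjoint_take_drop hq.2.2.2 le_rfl
      ((List.mem_take_iff_idxOf_lt hbx.1).mpr hbx.2.2)
  simpa [hb_take, hb_drop] using hsub (hb s hs)

theorem SuperSimple.before_of_before (hb : G.SuperSimple b) (hp : G.IsIOSimplePath p)
    (hq : G.IsIOSimplePath q) (hxb : Before p x b) (hx : x ∈ q) : Before q x b :=
  (before_or_before hx (hb q hq) hxb.ne).resolve_right (hb.not_before_of_before hp hq hxb)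

theorem SuperSimple.before_of_before' (hb : G.SuperSimple b) (hp : G.IsIOSimplePath p)
    (hq : G.IsIOSimplePath q) (hbx : Before p b x) (hx : x ∈ q) : Before q b x :=
  (before_or_before (hb q hq) hx hbx.ne).resolve_right
    fun hxb => hb.not_before_of_before hq hp hxb hbx

variable {ρ a c : V}

theorem IsIOSimplePath.ssAdjacent_of_last_before_of_first_after (hp : G.IsIOSimplePath p)
    (hρ : ¬ G.SuperSimple ρ)
    (ha : G.SuperSimple a) (haρ : Before p a ρ)
    (ha_last : ∀ c, G.SuperSimple c → Before p c ρ → ¬ Before p a c)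
    (hb : G.SuperSimple b) (hρb : Before p ρ b)
    (hb_first : ∀ c, G.SuperSimple c → Before p ρ c → ¬ Before p c b) :
    G.SSAdjacent a b := by
  refine ⟨ha, hb, (haρ.trans hρb).ne,
    fun q hq => hb.before_of_before hp hq (haρ.trans hρb) (ha q hq), ?_⟩
  rintro c hc q hq ⟨hac, hcb⟩
  have hac' : Before p a c := hc.before_of_before hq hp hac (ha p hp)
  have hcb' : Before p c b := hb.before_of_before hq hp hcb (hc p hp)
  rcases before_or_before (hc p hp) haρ.2.1 (fun h => hρ (h ▸ hc)) with hcρ | hρc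
  · exact ha_last c hc hcρ hac'
  · exact hb_first c hc hρc hcb'

theorem SSAdjacent.left_eq_of_last_before (hab : G.SSAdjacent a b) (hp : G.IsIOSimplePath p)
    (haρ : Before p a ρ) (hρb : Before p ρ b) (hc : G.SuperSimple c) (hcρ : Before p c ρ)
    (hc_last : ∀ d, G.SuperSimple d → Before p d ρ → ¬ Before p c d) : a = c := by
  by_contra hne
  rcases before_or_before haρ.1 hcρ.1 hne with hac | hca
  · exact hab.2.2.2.2 c hc p hp ⟨hac, hcρ.trans hρb⟩
  · exact hc_last a hab.1 haρ hca

theorem SSAdjacent.right_eq_of_first_after (hab : G.SSAdjacent a b) (hp : G.IsIOSimplePath p)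
    (haρ : Before p a ρ) (hρb : Before p ρ b) (hc : G.SuperSimple c) (hρc : Before p ρ c)
    (hc_first : ∀ d, G.SuperSimple d → Before p ρ d → ¬ Before p d c) : b = c := by
  by_contra hne
  rcases before_or_before hρb.2.1 hρc.2.1 hne with hbc | hcb
  · exact hc_first b hab.2.1 hρb hbc
  · exact hab.2.2.2.2 c hc p hp ⟨haρ.trans hρc, hcb⟩

end IONetwork

theorem stmt_8_general {V : Type} [DecidableEq V] (G : IONetwork V)
    (ρ : V)
    (hs : G.SimpleNode ρ) (hns : ¬ G.SuperSimple ρ) :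
    ∃! q : V × V, G.SSAdjacent q.1 q.2 ∧
      ∀ p : List V, G.IsIOSimplePath p → ρ ∈ p →
        Before p q.1 ρ ∧ Before p ρ q.2 := by
  obtain ⟨p₀, hp₀, hρ⟩ := hs
  obtain ⟨ρ₁, hss₁, h₁, h₁_last⟩ := exists_last_before (P := G.SuperSimple)
    ⟨G.inp, G.superSimple_inp, hp₀.inp_before hρ fun h => hns (h ▸ G.superSimple_inp)⟩
  obtain ⟨ρ₂, hss₂, h₂, h₂_first⟩ := exists_first_after (P := G.SuperSimple)
    ⟨G.out, G.superSimple_out, hp₀.before_out hρ fun h => hns (h ▸ G.superSimple_out)⟩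
  refine ⟨(ρ₁, ρ₂),
    ⟨hp₀.ssAdjacent_of_last_before_of_first_after hns hss₁ h₁ h₁_last hss₂ h₂ h₂_first,
      fun p hp hρp =>
        ⟨hss₁.before_of_before' hp₀ hp h₁ hρp, hss₂.before_of_before hp₀ hp h₂ hρp⟩⟩,
    ?_⟩
  rintro ⟨a, b⟩ ⟨hab, hbetween⟩
  obtain ⟨haρ, hρb⟩ := hbetween p₀ hp₀ hρ
  exact Prod.ext (hab.left_eq_of_last_before hp₀ haρ hρb hss₁ h₁ h₁_last)
    (hab.right_eq_of_first_after hp₀ haρ hρb hss₂ h₂ h₂_first)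

/-- Lemma 6.2.  Every simple node that is not super-simple lies
uniquely between a pair of adjacent super-simple nodes: there is a unique pair
`(ρ₁, ρ₂)` of adjacent super-simple nodes such that every ιo-simple path containing `ρ`
visits `ρ₁`, then `ρ`, then `ρ₂` in that order. -/
theorem stmt_8 {V : Type} [Fintype V] [DecidableEq V] (G : IONetwork V)
    (hcore : G.IsCore) (ρ : V)
    (hs : G.SimpleNode ρ) (hns : ¬ G.SuperSimple ρ) :
    ∃! q : V × V, G.SSAdjacent q.1 q.2 ∧
      ∀ p : List V, G.IsIOSimplePath p → ρ ∈ p →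
        Before p q.1 ρ ∧ Before p ρ q.2 :=
  stmt_8_general G ρ hs hns
end

section
/- Let G be a core input-output network, let B be an appendage path component of G that violates the no-cycle condition, let S be an ιo-simple path with complementary subnetwork C_S, and let γ be a cycle in G, lying in C_S, that contains both a node of B and a node of C_S ∖ B. Then γ contains no super-simple node, every simple node of γ fails to be super-simple, and all simple nodes of γ belong to the super-simple subnetwork L(ρ₁,ρ₂) of a single pair (ρ₁,ρ₂) of adjacent super-simple nodes. -/
open Classical MvPolynomial

/-
The cycle `γ` avoids the ιo-simple path `S`, and every super-simple node lies on `S`, so `γ` has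
no super-simple node. Since `B` is a strongly connected component of the appendage subnetwork and
`γ` meets both `B` and its complement, `γ` must contain a simple node `u`; on an ιo-simple path
through `u`, let `a` and `b` be the nearest super-simple nodes before and after `u`. The key fact
is that a path from a node before a super-simple node `c` on one ιo-simple path to a node after `c`
on another must pass through `c`, as it could otherwise be spliced into an ιo-walk avoiding `c`.
Hence super-simple nodes occur in the same order on all ιo-simple paths, `a` and `b` are
adjacent, and, as any node of `γ` and `u` are joined in both directions inside `γ` (thus avoiding
`a` and `b`), every simple node of `γ` lies between `a` and `b` on each ιo-simple path through it.
-/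

section

variable {α : Type}

theorem exists_nodup_isChain_of_reflTransGen {r : α → α → Prop} {a b : α}
    (h : Relation.ReflTransGen r a b) :
    ∃ l : List α, l.IsChain r ∧ l.Nodup ∧ l.head? = some a ∧ l.getLast? = some b := by
  induction h using Relation.ReflTransGen.head_induction_on with
  | refl => exact ⟨[b], List.isChain_singleton b, List.nodup_singleton b, rfl, rfl⟩
  | @head a d had _ ih =>
    obtain ⟨l, hl, hnd, hhd, hlast⟩ := ih
    by_cases ha : a ∈ l
    · -- a cycle through `a` is cut off
      refine ⟨l.drop (l.idxOf a), hl.drop _, hnd.sublist (List.drop_sublist _ _), ?_, ?_⟩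
      · simp [ha]
      · simp [List.getLast?_drop, List.idxOf_lt_length_of_mem ha, hlast]
    · obtain ⟨t, rfl⟩ := List.head?_eq_some_iff.1 hhd
      exact ⟨a :: d :: t, List.IsChain.cons_cons had hl, List.nodup_cons.2 ⟨ha, hnd⟩, rfl,
        by rwa [List.getLast?_cons_cons]⟩

section RestrictedReach

variable {E : α → α → Prop} {W W' : Set α} {a b u : α}

theorem RestrictedReach.mono (hW : W ⊆ W') (h : RestrictedReach E W a b) :
    RestrictedReach E W' a b :=
  Relation.ReflTransGen.mono (fun _ _ h => ⟨h.1, hW h.2.1, hW h.2.2⟩) _ _ h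

theorem RestrictedReach.exists_nodup_isChain (h : RestrictedReach E W a b)
    (ha : a ∈ W) : ∃ l : List α, l.IsChain E ∧ l.Nodup ∧ l.head? = some a ∧
      l.getLast? = some b ∧ ∀ x ∈ l, x ∈ W := by
  obtain ⟨l, hl, hnd, hhd, hlast⟩ := exists_nodup_isChain_of_reflTransGen h
  obtain ⟨t, rfl⟩ := List.head?_eq_some_iff.1 hhd
  refine ⟨a :: t, hl.imp fun _ _ h => h.1, hnd, hhd, hlast, ?_⟩
  exact List.IsChain.induction (· ∈ W) _ hl (fun _ _ h _ => h.2.2) (fun _ => ha)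

theorem restrictedReach_of_isChain {l : List α} (hl : l.IsChain E) (ha : l.head? = some a)
    (hb : l.getLast? = some b) : RestrictedReach E {x | x ∈ l} a b := by
  have hne : l ≠ [] := by rintro rfl; simp at ha
  obtain rfl : l.head hne = a := by simpa [List.head?_eq_some_head hne] using ha
  obtain rfl : l.getLast hne = b := by simpa [List.getLast?_eq_some_getLast hne] using hb
  exact List.relationReflTransGen_of_exists_isChain l
    ((List.IsChain.iff_mem.1 hl).imp fun _ _ ⟨hx, hy, h⟩ => ⟨h, hx, hy⟩) hne

theorem restrictedReach_take_of_isChain [DecidableEq α] {l : List α} (hl : l.IsChain E)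
    (ha : l.head? = some a) (hu : u ∈ l) :
    RestrictedReach E {x | x ∈ l.take (l.idxOf u + 1)} a u :=
  restrictedReach_of_isChain (hl.take _) (by simpa [List.head?_take] using ha)
    (by simp [List.getLast?_take, List.idxOf_lt_length_of_mem hu])

theorem restrictedReach_drop_of_isChain [DecidableEq α] {l : List α} (hl : l.IsChain E)
    (hu : u ∈ l) (hb : l.getLast? = some b) :
    RestrictedReach E {x | x ∈ l.drop (l.idxOf u)} u b :=
  restrictedReach_of_isChain (hl.drop _) (by simp [hu])
    (by simp [List.getLast?_drop, List.idxOf_lt_length_of_mem hu, hb])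

theorem IsCycle.restrictedReach {γ : List α} (hγ : IsCycle E γ) {u v : α}
    (hu : u ∈ γ) (hv : v ∈ γ) : RestrictedReach E {x | x ∈ γ} u v := by
  obtain ⟨hch, hlen, hhl⟩ := hγ
  have hne : γ ≠ [] := by rintro rfl; simp at hlen
  have hc := List.head?_eq_some_head hne
  have huc := restrictedReach_drop_of_isChain hch hu (hhl ▸ hc)
  have hcv := restrictedReach_take_of_isChain hch hc hv
  exact (huc.mono fun _ => List.mem_of_mem_drop).trans (hcv.mono fun _ => List.mem_of_mem_take)

end RestrictedReach

namespace IONetwork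

section

variable {G : IONetwork α} {c : α}

theorem superSimple_inp_s11 : G.SuperSimple G.inp := fun _ hp =>
  List.mem_of_mem_head? hp.2.1

theorem superSimple_out_s11 : G.SuperSimple G.out := fun _ hp =>
  List.mem_of_getLast? hp.2.2.1

theorem SuperSimple.not_restrictedReach_inp_out (hc : G.SuperSimple c) (hic : G.inp ≠ c) :
    ¬ RestrictedReach G.edge {z | z ≠ c} G.inp G.out := fun h => by
  obtain ⟨l, hl, hnd, hhd, hlast, hW⟩ := h.exists_nodup_isChain hic
  exact hW c (hc l ⟨hl, hhd, hlast, hnd⟩) rfl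

theorem IsAppendagePathComponent.exists_simpleNode_of_isCycle {B : Set α} {γ : List α}
    (hB : G.IsAppendagePathComponent B) (hγ : IsCycle G.edge γ) (hγB : ∃ v ∈ γ, v ∈ B)
    (hγB' : ∃ v ∈ γ, v ∉ B) : ∃ u ∈ γ, G.SimpleNode u := by
  by_contra! h
  obtain ⟨x, hxγ, hxB⟩ := hγB
  obtain ⟨w, hwγ, hwB⟩ := hγB'
  have hγA : {z | z ∈ γ} ⊆ {z | ¬ G.SimpleNode z} := h
  exact hwB (hB.2.2.2 w (h w hwγ)
    ⟨x, hxB, (hγ.restrictedReach hxγ hwγ).mono hγA, (hγ.restrictedReach hwγ hxγ).mono hγA⟩)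

end

variable [DecidableEq α] {G : IONetwork α} {p q : List α} {a b c u v : α}

theorem IsIOSimplePath.idxOf_inp (hp : G.IsIOSimplePath p) : p.idxOf G.inp = 0 :=
  (List.idxOf_eq_zero_iff_eq_nil_or_head_eq _).2 (Or.inr hp.2.1)

theorem IsIOSimplePath.idxOf_lt_idxOf_out (hp : G.IsIOSimplePath p) (hu : u ∈ p)
    (hne : u ≠ G.out) : p.idxOf u < p.idxOf G.out := by
  obtain ⟨l, rfl⟩ := List.getLast?_eq_some_iff.1 hp.2.2.1
  have hout : G.out ∉ l := fun h => by simpa using List.disjoint_of_nodup_append hp.2.2.2 h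
  have hul : u ∈ l := by simpa [hne] using hu
  rw [List.idxOf_append_of_mem hul, List.idxOf_append_of_notMem hout]
  exact (List.idxOf_lt_length_of_mem hul).trans_le (Nat.le_add_right _ _)

theorem IsIOSimplePath.restrictedReach_avoiding_inp (hp : G.IsIOSimplePath p) (hu : u ∈ p)
    (hc : c ∈ p) (huc : p.idxOf u < p.idxOf c) :
    RestrictedReach G.edge {z | z ≠ c} G.inp u :=
  (restrictedReach_take_of_isChain hp.1 hp.2.1 hu).mono fun _ hz hzc => by
    subst hzc
    exact absurd ((List.mem_take_iff_idxOf_lt hc).1 hz) (by omega)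

theorem IsIOSimplePath.restrictedReach_avoiding_out (hp : G.IsIOSimplePath p) (hv : v ∈ p)
    (hc : c ∈ p) (hcv : p.idxOf c < p.idxOf v) :
    RestrictedReach G.edge {z | z ≠ c} v G.out :=
  (restrictedReach_drop_of_isChain hp.1 hv hp.2.2.1).mono fun _ hz hzc => by
    subst hzc
    exact List.disjoint_take_drop hp.2.2.2 le_rfl ((List.mem_take_iff_idxOf_lt hc).2 hcv) hz

/-- Otherwise the prefix of `p` up to `u`, the path from `u` to `v` and the suffix of `q` from `v`
would form an ιo-walk avoiding `c`. -/
theorem SuperSimple.not_restrictedReach (hc : G.SuperSimple c) (hp : G.IsIOSimplePath p)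
    (hq : G.IsIOSimplePath q) (hu : u ∈ p) (hv : v ∈ q) (huc : p.idxOf u < p.idxOf c)
    (hcv : q.idxOf c < q.idxOf v) : ¬ RestrictedReach G.edge {z | z ≠ c} u v := fun h =>
  hc.not_restrictedReach_inp_out (fun hic => by rw [← hic, hp.idxOf_inp] at huc; omega)
    (((hp.restrictedReach_avoiding_inp hu (hc p hp) huc).trans h).trans
      (hq.restrictedReach_avoiding_out hv (hc q hq) hcv))

theorem SuperSimple.idxOf_lt_idxOf (ha : G.SuperSimple a) (hb : G.SuperSimple b)
    (hp : G.IsIOSimplePath p) (hq : G.IsIOSimplePath q) (hab : p.idxOf a < p.idxOf b) :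
    q.idxOf a < q.idxOf b := by
  have hne : q.idxOf a ≠ q.idxOf b := fun h => by
    rw [(List.idxOf_inj (ha q hq)).1 h] at hab; omega
  by_contra hba
  exact hb.not_restrictedReach hp hq (ha p hp) (ha q hq) hab (by omega) .refl

theorem SuperSimple.idxOf_ne (hc : G.SuperSimple c) (hu : u ∈ p) (hns : ¬ G.SuperSimple u) :
    p.idxOf u ≠ p.idxOf c := fun h => hns ((List.idxOf_inj hu).1 h ▸ hc)

theorem IsIOSimplePath.exists_ssAdjacent (hp : G.IsIOSimplePath p) (hu : u ∈ p)
    (hns : ¬ G.SuperSimple u) :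
    ∃ a b, G.SSAdjacent a b ∧ p.idxOf a < p.idxOf u ∧ p.idxOf u < p.idxOf b := by
  have hiu : p.idxOf G.inp < p.idxOf u := by
    have := superSimple_inp_s11.idxOf_ne hu hns
    rw [hp.idxOf_inp] at this ⊢
    omega
  have huo : p.idxOf u < p.idxOf G.out :=
    hp.idxOf_lt_idxOf_out hu fun h => hns (h ▸ superSimple_out_s11)
  obtain ⟨a, ha, hamax⟩ := Finset.exists_max_image
    (p.toFinset.filter fun w => G.SuperSimple w ∧ p.idxOf w < p.idxOf u) p.idxOf
    ⟨G.inp, by simp [superSimple_inp_s11 p hp, superSimple_inp_s11, hiu]⟩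
  obtain ⟨b, hb, hbmin⟩ := Finset.exists_min_image
    (p.toFinset.filter fun w => G.SuperSimple w ∧ p.idxOf u < p.idxOf w) p.idxOf
    ⟨G.out, by simp [superSimple_out_s11 p hp, superSimple_out_s11, huo]⟩
  simp only [Finset.mem_filter, List.mem_toFinset] at ha hb
  refine ⟨a, b, ⟨ha.2.1, hb.2.1, ?_, fun q hq => ?_, fun c hc q hq ⟨hac, hcb⟩ => ?_⟩,
    ha.2.2, hb.2.2⟩
  · rintro rfl
    omega
  · exact ⟨ha.2.1 q hq, hb.2.1 q hq, ha.2.1.idxOf_lt_idxOf hb.2.1 hp hq (ha.2.2.trans hb.2.2)⟩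
  · have hac' := ha.2.1.idxOf_lt_idxOf hc hq hp hac.2.2
    have hcb' := hc.idxOf_lt_idxOf hb.2.1 hq hp hcb.2.2
    rcases lt_trichotomy (p.idxOf c) (p.idxOf u) with h | h | h
    · have := hamax c (by simp [hc p hp, hc, h])
      omega
    · exact hc.idxOf_ne hu hns h.symm
    · have := hbmin c (by simp [hc p hp, hc, h])
      omega

theorem SSAdjacent.inL_of_restrictedReach (hab : G.SSAdjacent a b) (hp : G.IsIOSimplePath p)
    (hu : u ∈ p) (hau : p.idxOf a < p.idxOf u) (hub : p.idxOf u < p.idxOf b)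
    (hv : G.SimpleNode v) (hvu : RestrictedReach G.edge {z | z ≠ a} v u)
    (huv : RestrictedReach G.edge {z | z ≠ b} u v) : G.InL a b v := by
  by_cases hva : v = a
  · exact Or.inl hva
  by_cases hvb : v = b
  · exact Or.inr (Or.inl hvb)
  obtain ⟨q, hq, hvq⟩ := hv
  have haq := hab.1 q hq
  have hbq := hab.2.1 q hq
  refine Or.inr (Or.inr ⟨q, hq, ⟨haq, hvq, ?_⟩, ⟨hvq, hbq, ?_⟩⟩)
  · have hne : q.idxOf v ≠ q.idxOf a := fun h => hva ((List.idxOf_inj hvq).1 h)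
    by_contra h
    exact hab.1.not_restrictedReach hq hp hvq hu (by omega) hau hvu
  · have hne : q.idxOf v ≠ q.idxOf b := fun h => hvb ((List.idxOf_inj hvq).1 h)
    by_contra h
    exact hab.2.1.not_restrictedReach hp hq hu hvq hub (by omega) huv

end IONetwork

end

theorem stmt_11_general {V : Type} [DecidableEq V] (G : IONetwork V)
    (B : Set V)
    (hB : G.IsAppendagePathComponent B)
    (S : List V) (hS : G.IsIOSimplePath S)
    (γ : List V) (hγ : IsCycle G.edge γ) (hγS : ∀ v ∈ γ, v ∉ S)
    (hγB : ∃ v ∈ γ, v ∈ B) (hγB' : ∃ v ∈ γ, v ∉ B) :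
    (∀ v ∈ γ, ¬ G.SuperSimple v) ∧
    (∀ v ∈ γ, G.SimpleNode v → ¬ G.SuperSimple v) ∧
    ∃ a b : V, G.SSAdjacent a b ∧ ∀ v ∈ γ, G.SimpleNode v → G.InL a b v := by
  have hnss : ∀ v ∈ γ, ¬ G.SuperSimple v := fun v hv hss => hγS v hv (hss S hS)
  refine ⟨hnss, fun v hv _ => hnss v hv, ?_⟩
  obtain ⟨u, huγ, p, hp, hup⟩ := hB.exists_simpleNode_of_isCycle hγ hγB hγB'
  obtain ⟨a, b, hab, hau, hub⟩ := hp.exists_ssAdjacent hup (hnss u huγ)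
  have hγ_avoids : ∀ c, G.SuperSimple c → {z | z ∈ γ} ⊆ {z | z ≠ c} :=
    fun c hc z hz hzc => hnss z hz (hzc ▸ hc)
  exact ⟨a, b, hab, fun v hv hvs => hab.inL_of_restrictedReach hp hup hau hub hvs
    ((hγ.restrictedReach hv huγ).mono (hγ_avoids a hab.1))
    ((hγ.restrictedReach huγ hv).mono (hγ_avoids b hab.2.1))⟩

/-- Lemma 6.3 (d).  Let `B` be an appendage path component violating
the no-cycle condition, `S` an ιo-simple path, and `γ` a cycle lying in the
complementary subnetwork `C_S` containing a node of `B` and a node of `C_S ∖ B`.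
Then `γ` contains no super-simple node (so every simple node of `γ` is not
super-simple), and all simple nodes of `γ` belong to the super-simple subnetwork
`L(a,b)` of a single pair `(a,b)` of adjacent super-simple nodes. -/
theorem stmt_11 {V : Type} [Fintype V] [DecidableEq V] (G : IONetwork V)
    (hcore : G.IsCore) (B : Set V)
    (hB : G.IsAppendagePathComponent B) (hviol : ¬ G.NoCycleCond B)
    (S : List V) (hS : G.IsIOSimplePath S)
    (γ : List V) (hγ : IsCycle G.edge γ) (hγS : ∀ v ∈ γ, v ∉ S)
    (hγB : ∃ v ∈ γ, v ∈ B) (hγB' : ∃ v ∈ γ, v ∉ B) :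
    (∀ v ∈ γ, ¬ G.SuperSimple v) ∧
    (∀ v ∈ γ, G.SimpleNode v → ¬ G.SuperSimple v) ∧
    ∃ a b : V, G.SSAdjacent a b ∧ ∀ v ∈ γ, G.SimpleNode v → G.InL a b v :=
  stmt_11_general G B hB S hS γ hγ hγS hγB hγB'
end

section
/- Let R be a commutative ring, and let I = {ι} ⊔ Σ ⊔ U ⊔ D ⊔ {o} be a finite index set partitioned into the singleton ι, sets Σ, U, D, and the singleton o. Let J be an I × I matrix over R (rows indexed by target, columns by source) satisfying: J d a = 0 for all d ∈ D and all a ∉ D (no arrows into D from outside D), and J b u = 0 for all u ∈ U and all b ∈ {ι} ∪ Σ ∪ {o} (no arrows from U to ι, Σ, or o). Let H be the matrix obtained from J by deleting the row indexed by ι and the column indexed by o, and let H_c be the (Σ ∪ {o}) × ({ι} ∪ Σ) matrix of corresponding entries of J. Then det(H) = ± det(J_{UU}) · det(J_{DD}) · det(H_c), where J_{UU} and J_{DD} are the principal submatrices of J indexed by U and D respectively. -/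
open Classical MvPolynomial

/-! Order the columns of `H` as `({ι} ∪ S) ⊔ U ⊔ D` and its rows as `(S ∪ {o}) ⊔ U ⊔ D`, the
first blocks matched through `ec`. No arrow enters `D` from outside and no arrow leaves `U`
for `{ι} ∪ S ∪ {o}`, so the reordered matrix is block triangular with diagonal blocks `H_c`,
`J_UU`, `J_DD`. Any other matching `e` of rows with columns differs from this one by a
permutation, which only changes the sign of the determinant. -/

namespace Matrix

variable {m n R : Type*} [Fintype m] [DecidableEq m] [CommRing R]

theorem det_submatrix_equiv_left_eq_or_eq_neg {x : R} (A : Matrix n m R) (e f : m ≃ n)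
    (hf : (A.submatrix f id).det = x) :
    (A.submatrix e id).det = x ∨ (A.submatrix e id).det = -x := by
  have hperm : A.submatrix e id = (A.submatrix f id).submatrix (e.trans f.symm) id := by
    ext i j
    simp
  rw [hperm, det_permute, hf]
  rcases Int.units_eq_one_or (Equiv.Perm.sign (e.trans f.symm)) with h | h <;> simp [h]

variable [Fintype n] [DecidableEq n]

theorem det_of_toBlocks₂₁_eq_zero (M : Matrix (m ⊕ n) (m ⊕ n) R) (h : M.toBlocks₂₁ = 0) :
    M.det = M.toBlocks₁₁.det * M.toBlocks₂₂.det := by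
  conv_lhs => rw [← M.fromBlocks_toBlocks, h]
  exact det_fromBlocks_zero₂₁ _ _ _

theorem det_of_toBlocks₁₂_eq_zero (M : Matrix (m ⊕ n) (m ⊕ n) R) (h : M.toBlocks₁₂ = 0) :
    M.det = M.toBlocks₁₁.det * M.toBlocks₂₂.det := by
  conv_lhs => rw [← M.fromBlocks_toBlocks, h]
  exact det_fromBlocks_zero₁₂ _ _ _

end Matrix

def sumSumEquivSubtypeOfPartition {α : Type*} (P p q r : α → Prop) [DecidablePred p]
    [DecidablePred fun x => p x ∨ q x] (hpq : ∀ x, p x → ¬ q x) (hpqr : ∀ x, p x ∨ q x → ¬ r x)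
    (hP : ∀ x, P x ↔ (p x ∨ q x) ∨ r x) :
    ({x // p x} ⊕ {x // q x}) ⊕ {x // r x} ≃ {x // P x} :=
  ((subtypeOrEquiv (fun x => p x ∨ q x) r (by simpa [Pi.disjoint_iff] using hpqr)).trans
    ((subtypeOrEquiv p q (by simpa [Pi.disjoint_iff] using hpq)).sumCongr
      (Equiv.refl _))).symm.trans (Equiv.subtypeEquivRight fun x => (hP x).symm)

/-- determinant identity underlying Theorem 2.3, core reduction.
For an index set partitioned as `{ι} ⊔ S ⊔ U ⊔ D ⊔ {o}` and a Jacobian `J` with no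
arrows into `D` from outside `D` and no arrows from `U` into `{ι} ∪ S ∪ {o}`, the
determinant of the homeostasis matrix `H` (delete row `ι`, column `o`) equals, up to
sign, `det J_{UU} · det J_{DD} · det H_c`, where `H_c` is the homeostasis matrix of the
core part on `{ι} ∪ S ∪ {o}`. -/
theorem stmt_13 {I : Type} [Fintype I] [DecidableEq I] {R : Type*} [CommRing R]
    (ι o : I) (hιo : ι ≠ o) (S U D : Set I)
    (hcover : ∀ v : I, v = ι ∨ v = o ∨ v ∈ S ∨ v ∈ U ∨ v ∈ D)
    (hι : ι ∉ S ∧ ι ∉ U ∧ ι ∉ D) (ho : o ∉ S ∧ o ∉ U ∧ o ∉ D)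
    (hSU : Disjoint S U) (hSD : Disjoint S D) (hUD : Disjoint U D)
    (J : Matrix I I R)
    (hD : ∀ d ∈ D, ∀ a : I, a ∉ D → J d a = 0)
    (hU : ∀ u ∈ U, ∀ b : I, (b = ι ∨ b ∈ S ∨ b = o) → J b u = 0)
    (e : {v : I // v ≠ o} ≃ {v : I // v ≠ ι})
    (ec : {v : I // v = ι ∨ v ∈ S} ≃ {v : I // v ∈ S ∨ v = o}) :
    Matrix.det (Matrix.of fun r c : {v : I // v ≠ o} => J (e r).1 c.1) =
      Matrix.det (Matrix.of fun i j : ↥U => J i.1 j.1) *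
      Matrix.det (Matrix.of fun i j : ↥D => J i.1 j.1) *
      Matrix.det (Matrix.of fun r c : {v : I // v = ι ∨ v ∈ S} => J (ec r).1 c.1) ∨
    Matrix.det (Matrix.of fun r c : {v : I // v ≠ o} => J (e r).1 c.1) =
      -(Matrix.det (Matrix.of fun i j : ↥U => J i.1 j.1) *
        Matrix.det (Matrix.of fun i j : ↥D => J i.1 j.1) *
        Matrix.det (Matrix.of fun r c : {v : I // v = ι ∨ v ∈ S} => J (ec r).1 c.1)) := by
  let col := sumSumEquivSubtypeOfPartition (· ≠ o) (fun v => v = ι ∨ v ∈ S) (· ∈ U) (· ∈ D)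
    (by grind) (by grind) (by grind)
  let row := sumSumEquivSubtypeOfPartition (· ≠ ι) (fun v => v ∈ S ∨ v = o) (· ∈ U) (· ∈ D)
    (by grind) (by grind) (by grind)
  let t := (ec.sumCongr (Equiv.refl U)).sumCongr (Equiv.refl D)
  let f := col.symm.trans (t.trans row)
  let H : Matrix {v : I // v ≠ ι} {v : I // v ≠ o} R := Matrix.of fun r c => J r.1 c.1
  let M := Matrix.of fun x y => J (row (t x)).1 (col y).1
  have hM : (H.submatrix f id).submatrix col col = M := by
    ext x y
    simp [M, H, f]
  have hM₂₁ : M.toBlocks₂₁ = 0 := by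
    ext d a
    refine hD d.1 d.2 _ ?_
    rcases a with ⟨a, rfl | ha⟩ | ⟨a, ha⟩
    exacts [hι.2.2, Set.disjoint_left.mp hSD ha, Set.disjoint_left.mp hUD ha]
  have hM₁₂ : M.toBlocks₁₁.toBlocks₁₂ = 0 := by
    ext a u
    exact hU u.1 u.2 _ (Or.inr (ec a).2)
  have hf : (H.submatrix f id).det = (Matrix.of fun i j : ↥U => J i.1 j.1).det *
      (Matrix.of fun i j : ↥D => J i.1 j.1).det *
      (Matrix.of fun r c : {v : I // v = ι ∨ v ∈ S} => J (ec r).1 c.1).det := by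
    rw [← Matrix.det_submatrix_equiv_self col, hM, M.det_of_toBlocks₂₁_eq_zero hM₂₁,
      M.toBlocks₁₁.det_of_toBlocks₁₂_eq_zero hM₁₂]
    exact mul_rotate _ _ _
  exact Matrix.det_submatrix_equiv_left_eq_or_eq_neg H e f hf
end

section
/- Let G be a core input-output network on node set V with input ι and output o, and let H be its generic homeostasis matrix over R = MvPolynomial (V × V) ℚ. Let K = {τ₁, …, τ_k} ⊆ V ∖ {ι, o} be a k-element node subset, and suppose there are permutations of the rows and of the columns of H bringing it to block upper triangular form [[A, B, C], [0, B_η, D], [0, 0, E]] (A and/or E possibly empty), where the diagonal block B_η is the K × K submatrix of H (its rows are the rows of H indexed by K and its columns are the columns of H indexed by K), so that B_η contains the k self-couplings x_{τᵢ,τᵢ}. Then B_η equals the generic Jacobian J_K of the induced subnetwork on K, and every node τᵢ ∈ K is an appendage node of G, i.e., τᵢ lies on no ιo-simple path. -/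
open Classical MvPolynomial

/-!
Let `P = R₁ ∪ {ι}`: the rows of the first block together with the deleted input row.
Self-couplings lie on the diagonal, so the zero blocks force `C₁ ⊆ P`, and since the first
diagonal block is square at most one node of `P` lies outside `C₁`.
Now follow an ιo-simple path through a node `τ ∈ K`. Before `τ` it has to enter the rows
`K ∪ R₃` from outside them, and the zero block below `C₁` means the entering arrow starts at a
node of `P ∖ C₁`. After `τ` it has to leave `K ∪ C₁` to reach `o`, and the zero blocks to the
left of `R₃` mean the leaving arrow ends at a node of `P ∖ C₁`. A simple path cannot visit the
same node on both sides of `τ`, a contradiction.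
-/

open Set

theorem ncard_insert_sdiff_le_one {α : Type*} {R C : Set α} {a : α} (hC : C ⊆ insert a R)
    (hcard : R.ncard = C.ncard) (hfin : C.Finite := by toFinite_tac) :
    (insert a R \ C).ncard ≤ 1 := by
  rw [ncard_sdiff hC hfin]
  have := ncard_insert_le a R
  omega

theorem notMem_of_union_union_eq {α : Type*} {A B C : Set α} {a : α}
    (h : A ∪ B ∪ C = {v | v ≠ a}) : a ∉ A ∧ a ∉ B ∧ a ∉ C := by
  simpa [and_assoc] using (Set.ext_iff.mp h a).not

theorem mem_insert_of_notMem_union {α : Type*} {R₁ K R₃ : Set α} {a x : α}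
    (hrow : R₁ ∪ K ∪ R₃ = {v | v ≠ a}) (hx : x ∉ K ∪ R₃) : x ∈ insert a R₁ := by
  rcases eq_or_ne x a with rfl | hxa
  · exact mem_insert x R₁
  · have : x ∈ R₁ ∪ K ∪ R₃ := hrow ▸ hxa
    simp only [mem_union, not_or] at this hx
    exact mem_insert_of_mem a (by tauto)

namespace IONetwork

variable {V : Type} (G : IONetwork V)

theorem genEntry_eq_zero_iff {c r : V} : G.genEntry c r = 0 ↔ ¬(c = r ∨ G.edge c r) := by
  unfold genEntry
  split_ifs with h <;> simp [h, MvPolynomial.X_ne_zero]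

variable {G} {K R1 R3 C1 C3 : Set V}

theorem subset_insert_inp_of_genEntry_eq_zero (hrow : R1 ∪ K ∪ R3 = {v | v ≠ G.inp})
    (hz : ∀ r ∈ K ∪ R3, ∀ c ∈ C1, G.genEntry c r = 0) : C1 ⊆ insert G.inp R1 :=
  fun c hc => mem_insert_of_notMem_union hrow fun hcKR =>
    G.genEntry_eq_zero_iff.mp (hz c hcKR c hc) (Or.inl rfl)

theorem IsIOSimplePath.exists_mem_left_of_genEntry_eq_zero {l₁ l₂ : List V} {v : V}
    (hp : G.IsIOSimplePath (l₁ ++ v :: l₂)) (hrow : R1 ∪ K ∪ R3 = {v | v ≠ G.inp})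
    (hz : ∀ r ∈ K ∪ R3, ∀ c ∈ C1, G.genEntry c r = 0) (hv : v ∈ K ∪ R3) :
    ∃ x ∈ l₁, x ∈ insert G.inp R1 \ C1 := by
  by_contra! h
  have hchain : (l₁ ++ [v]).IsChain G.edge := (List.isChain_split.mp hp.1).1
  have hhead : ∀ hne, (l₁ ++ [v]).head hne = G.inp := by
    have := hp.2.1
    cases l₁ <;> simp_all
  refine (List.IsChain.iff_mem.mp hchain).induction (· ∉ K ∪ R3) _ ?_
    (fun hne => hhead hne ▸ fun hinp =>
      have := notMem_of_union_union_eq hrow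
      hinp.elim this.2.1 this.2.2)
    v (by simp) hv
  rintro x y ⟨hx, -, hxy⟩ hxKR hyKR
  have hxl : x ∈ l₁ := by
    simp only [List.mem_append, List.mem_singleton] at hx
    exact hx.resolve_right (by rintro rfl; exact hxKR hv)
  have hxC : x ∈ C1 := by
    by_contra hxC
    exact h x hxl ⟨mem_insert_of_notMem_union hrow hxKR, hxC⟩
  exact G.genEntry_eq_zero_iff.mp (hz y hyKR x hxC) (Or.inr hxy)

theorem IsIOSimplePath.exists_mem_right_of_genEntry_eq_zero {l₁ l₂ : List V} {v : V}
    (hp : G.IsIOSimplePath (l₁ ++ v :: l₂)) (hrow : R1 ∪ K ∪ R3 = {v | v ≠ G.inp})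
    (hcol : C1 ∪ K ∪ C3 = {v | v ≠ G.out})
    (hz : ∀ r ∈ R3, ∀ c ∈ C1 ∪ K, G.genEntry c r = 0) (hv : v ∈ K ∪ C1) :
    ∃ y ∈ l₂, y ∈ insert G.inp R1 \ C1 := by
  by_contra! h
  have hchain : (v :: l₂).IsChain G.edge := (List.isChain_split.mp hp.1).2
  have hlast : (v :: l₂).getLast (List.cons_ne_nil v l₂) = G.out := by
    have := hp.2.2.1
    simp_all [List.getLast?_eq_some_getLast]
  have hout : G.out ∉ K ∪ C1 := fun hKC =>
    have := notMem_of_union_union_eq hcol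
    hKC.elim this.2.1 this.1
  refine hout (hlast ▸ (List.IsChain.iff_mem_mem_tail.mp hchain).induction (· ∈ K ∪ C1) _ ?_
    (fun _ => hv) _ (List.getLast_mem _))
  rintro x y ⟨-, hy, hxy⟩ hx
  by_contra hyKC
  have hyR3 : y ∉ R3 := fun hyR3 =>
    G.genEntry_eq_zero_iff.mp (hz y hyR3 x (union_comm K C1 ▸ hx)) (Or.inr hxy)
  have hyKR : y ∉ K ∪ R3 := fun hyKR => hyKR.elim (fun hyK => hyKC (Or.inl hyK)) hyR3
  exact h y hy ⟨mem_insert_of_notMem_union hrow hyKR, fun hyC => hyKC (Or.inr hyC)⟩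

end IONetwork

theorem stmt_14_general {V : Type} [Fintype V] (G : IONetwork V)
    (K : Set V)
    (R1 R3 C1 C3 : Set V)
    (hrowpart : R1 ∪ K ∪ R3 = {v : V | v ≠ G.inp})
    (hcolpart : C1 ∪ K ∪ C3 = {v : V | v ≠ G.out})
    (hsq1 : R1.ncard = C1.ncard)
    (hz1 : ∀ r ∈ K ∪ R3, ∀ c ∈ C1, G.genEntry c r = 0)
    (hz2 : ∀ r ∈ R3, ∀ c ∈ C1 ∪ K, G.genEntry c r = 0) :
    (∀ r c : ↥K, G.genJac K r c = G.genEntry c.1 r.1) ∧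
    (∀ v ∈ K, ¬ G.SimpleNode v) := by
  refine ⟨fun r c => rfl, fun v hvK ⟨p, hp, hvp⟩ => ?_⟩
  obtain ⟨l₁, l₂, rfl⟩ := List.append_of_mem hvp
  obtain ⟨x, hxl, hx⟩ := hp.exists_mem_left_of_genEntry_eq_zero hrowpart hz1 (Or.inl hvK)
  obtain ⟨y, hyl, hy⟩ :=
    hp.exists_mem_right_of_genEntry_eq_zero hrowpart hcolpart hz2 (Or.inl hvK)
  have hxy : x = y := ((ncard_le_one (toFinite _)).mp (ncard_insert_sdiff_le_one
    (IONetwork.subset_insert_inp_of_genEntry_eq_zero hrowpart hz1) hsq1)) x hx y hy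
  exact List.disjoint_of_nodup_append hp.2.2.2 hxl (List.mem_cons_of_mem v (hxy ▸ hyl))

/-- Lemma 5.2.  If row and column permutations bring the generic
homeostasis matrix `H` of a core network to block upper triangular form
`[[A,B,C],[0,B_η,D],[0,0,E]]` whose middle diagonal block `B_η` is the `K × K` submatrix
of `H` (rows partition `R1 ⊔ K ⊔ R3` of `V∖{ι}`, columns partition `C1 ⊔ K ⊔ C3` of
`V∖{o}`, with square off blocks and the indicated zero blocks), then `B_η` equals the
generic Jacobian of the induced subnetwork on `K`, and every node of `K` is an
appendage node. -/
theorem stmt_14 {V : Type} [Fintype V] [DecidableEq V] (G : IONetwork V)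
    (hcore : G.IsCore) (K : Set V)
    (hK : ∀ v ∈ K, v ≠ G.inp ∧ v ≠ G.out)
    (R1 R3 C1 C3 : Set V)
    (hrowpart : R1 ∪ K ∪ R3 = {v : V | v ≠ G.inp})
    (hR1K : Disjoint R1 K) (hR1R3 : Disjoint R1 R3) (hKR3 : Disjoint K R3)
    (hcolpart : C1 ∪ K ∪ C3 = {v : V | v ≠ G.out})
    (hC1K : Disjoint C1 K) (hC1C3 : Disjoint C1 C3) (hKC3 : Disjoint K C3)
    (hsq1 : R1.ncard = C1.ncard) (hsq3 : R3.ncard = C3.ncard)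
    (hz1 : ∀ r ∈ K ∪ R3, ∀ c ∈ C1, G.genEntry c r = 0)
    (hz2 : ∀ r ∈ R3, ∀ c ∈ C1 ∪ K, G.genEntry c r = 0) :
    (∀ r c : ↥K, G.genJac K r c = G.genEntry c.1 r.1) ∧
    (∀ v ∈ K, ¬ G.SimpleNode v) :=
  stmt_14_general G K R1 R3 C1 C3 hrowpart hcolpart hsq1 hz1 hz2
end
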